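/- arXiv:2411.11092 — 7 statements merged into one kernel-verified Lean document; each statement's English description precedes it below -/
import Mathlib

section
/- Let A_ρ ⊆ M_n be a structural matrix algebra and let φ : A_ρ → M_n be an injective Jordan homomorphism. Then there exist an invertible matrix S ∈ M_n, an idempotent P belonging to the center of A_ρ, and a transitive map g : ρ → ℂ∖{0} such that φ(X) = S (P g*(X) + (I − P) g*(X)ᵗ) S⁻¹ for all X ∈ A_ρ, where g* is the algebra automorphism of A_ρ induced by g. -/
/-!
The images `φ(Eᵢᵢ)` of the diagonal matrix units are pairwise orthogonal nonzero idempotents,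
so after conjugating by an invertible `S` we may assume `φ(Eᵢᵢ) = Eᵢᵢ`. The Peirce decomposition
with respect to the `Eₖₖ` then forces `φ(Eᵢⱼ) = cᵢⱼ Eᵢⱼ + dᵢⱼ Eⱼᵢ` for `i ≠ j`, where `cᵢⱼ dᵢⱼ = 0`
(as `Eᵢⱼ² = 0`) and `(cᵢⱼ, dᵢⱼ) ≠ 0` (by injectivity). The Jordan identities for two matrix units
sharing an index show that whether `φ` is multiplicative (`cᵢⱼ ≠ 0`) or antimultiplicative
(`dᵢⱼ ≠ 0`) on `Eᵢⱼ` is the same for adjacent edges, hence constant on each connected component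
of the comparability graph of `ρ`. So `P` is the diagonal idempotent supported on the
multiplicative components, which is central, and `g` is `c` there and `d` elsewhere; the same
identities `cᵢₖ = cᵢⱼ cⱼₖ`, `dᵢₖ = dᵢⱼ dⱼₖ` and `cᵢⱼ cⱼᵢ + dᵢⱼ dⱼᵢ = 1` make `g` transitive.
-/

open Matrix Relation

variable {ι : Type*} [DecidableEq ι]

section StructuralMatrixAlgebra

variable [Fintype ι] (R : Type*) [CommSemiring R] (ρ : ι → ι → Prop) [IsPreorder ι ρ]

def structuralMatrixAlgebra : Subalgebra R (Matrix ι ι R) where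
  carrier := {X | ∀ i j, ¬ ρ i j → X i j = 0}
  mul_mem' {X Y} hX hY i j hij := Finset.sum_eq_zero fun k _ => by
    by_cases hik : ρ i k
    · simp [hY k j fun hkj => hij (_root_.trans hik hkj)]
    · simp [hX i k hik]
  add_mem' hX hY i j hij := by simp [hX i j hij, hY i j hij]
  algebraMap_mem' c i j hij := diagonal_apply_ne _ fun h => hij (h ▸ refl i)

variable {R ρ}

theorem single_mem_structuralMatrixAlgebra {i j : ι} (h : ρ i j) (c : R) :
    single i j c ∈ structuralMatrixAlgebra R ρ := fun a b hab => by
  rw [single_apply, if_neg fun ⟨hia, hjb⟩ => hab (hia ▸ hjb ▸ h)]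

theorem diagonal_mem_structuralMatrixAlgebra (v : ι → R) :
    diagonal v ∈ structuralMatrixAlgebra R ρ := fun i _ hij =>
  diagonal_apply_ne _ fun h => hij (h ▸ refl i)

theorem diagonal_mul_eq_mul_diagonal {v : ι → R} (hv : ∀ i j, ρ i j → v i = v j)
    {Y : Matrix ι ι R} (hY : Y ∈ structuralMatrixAlgebra R ρ) :
    diagonal v * Y = Y * diagonal v := by
  ext i j
  rw [diagonal_mul, mul_diagonal]
  by_cases hij : ρ i j
  · rw [hv i j hij, mul_comm]
  · rw [hY i j hij, mul_zero, zero_mul]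

end StructuralMatrixAlgebra

structure IsJordanHomOn {R A B : Type*} [CommSemiring R] [Semiring A] [Semiring B]
    [Algebra R A] [Module R B] (S : Subalgebra R A) (φ : A → B) : Prop where
  map_add : ∀ x ∈ S, ∀ y ∈ S, φ (x + y) = φ x + φ y
  map_smul : ∀ (c : R), ∀ x ∈ S, φ (c • x) = c • φ x
  map_mul_self : ∀ x ∈ S, φ (x * x) = φ x * φ x

namespace IsJordanHomOn

variable {R A B : Type*} [CommRing R] [Ring A] [Ring B] [Algebra R A] [Algebra R B]
  {S : Subalgebra R A} {φ : A → B}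

theorem map_zero (hφ : IsJordanHomOn S φ) : φ 0 = 0 := by
  simpa using hφ.map_smul 0 0 S.zero_mem

theorem map_sum (hφ : IsJordanHomOn S φ) {κ : Type*} (s : Finset κ) {f : κ → A}
    (hf : ∀ k ∈ s, f k ∈ S) : φ (∑ k ∈ s, f k) = ∑ k ∈ s, φ (f k) := by
  classical
  induction s using Finset.induction with
  | empty => simpa using hφ.map_zero
  | insert a s ha ih =>
    rw [Finset.sum_insert ha, Finset.sum_insert ha,
      hφ.map_add _ (hf a (s.mem_insert_self a)) _ (S.sum_mem fun k hk => hf k (by simp [hk])),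
      ih fun k hk => hf k (by simp [hk])]

theorem map_mul_add_mul (hφ : IsJordanHomOn S φ) {x y : A} (hx : x ∈ S) (hy : y ∈ S) :
    φ (x * y + y * x) = φ x * φ y + φ y * φ x := by
  have h := hφ.map_mul_self (x + y) (S.add_mem hx hy)
  have hxy : (x + y) * (x + y) = (x * x + y * y) + (x * y + y * x) := by noncomm_ring
  rw [hxy, hφ.map_add _ (S.add_mem (S.mul_mem hx hx) (S.mul_mem hy hy)) _
      (S.add_mem (S.mul_mem hx hy) (S.mul_mem hy hx)),
    hφ.map_add _ (S.mul_mem hx hx) _ (S.mul_mem hy hy), hφ.map_mul_self x hx,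
    hφ.map_mul_self y hy, hφ.map_add x hx y hy] at h
  calc φ (x * y + y * x) = (φ x + φ y) * (φ x + φ y) - (φ x * φ x + φ y * φ y) :=
        eq_sub_of_add_eq' h
    _ = φ x * φ y + φ y * φ x := by noncomm_ring

theorem conj (hφ : IsJordanHomOn S φ) (u : Bˣ) :
    IsJordanHomOn S fun x => ↑u⁻¹ * φ x * ↑u where
  map_add x hx y hy := by simp only [hφ.map_add x hx y hy, mul_add, add_mul]
  map_smul c x hx := by simp only [hφ.map_smul c x hx, mul_smul_comm, smul_mul_assoc]
  map_mul_self x hx := by simp only [hφ.map_mul_self x hx, mul_assoc, Units.mul_inv_cancel_left]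

theorem eqOn_of_map_single [Fintype ι] {ρ : ι → ι → Prop} [IsPreorder ι ρ]
    {φ : Matrix ι ι R → B} (hφ : IsJordanHomOn (structuralMatrixAlgebra R ρ) φ)
    (F : Matrix ι ι R →ₗ[R] B) (h : ∀ i j, ρ i j → φ (single i j 1) = F (single i j 1)) :
    Set.EqOn φ F (structuralMatrixAlgebra R ρ) := by
  intro X hX
  have hmem (i j : ι) : single i j (X i j) ∈ structuralMatrixAlgebra R ρ := by
    by_cases hij : ρ i j
    · exact single_mem_structuralMatrixAlgebra hij _
    · rw [hX i j hij, single_zero]; exact zero_mem _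
  have hsingle (i j : ι) : φ (single i j (X i j)) = F (single i j (X i j)) := by
    by_cases hij : ρ i j
    · rw [← mul_one (X i j), ← smul_eq_mul, ← smul_single,
        hφ.map_smul _ _ (single_mem_structuralMatrixAlgebra hij 1), _root_.map_smul, h i j hij]
    · rw [hX i j hij, single_zero, hφ.map_zero, _root_.map_zero]
  conv_lhs => rw [matrix_eq_sum_single X]
  conv_rhs => rw [matrix_eq_sum_single X]
  rw [hφ.map_sum _ fun i _ => sum_mem fun j _ => hmem i j, _root_.map_sum]
  refine Finset.sum_congr rfl fun i _ => ?_
  rw [hφ.map_sum _ fun j _ => hmem i j, _root_.map_sum]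
  exact Finset.sum_congr rfl fun j _ => hsingle i j

end IsJordanHomOn

section StandardJordanMap

variable [Fintype ι] {R : Type*} [CommRing R]

-- `of g ⊙ X` is the automorphism `g*` of the structural matrix algebra induced by `g`.
def standardJordanMap (P : Matrix ι ι R) (g : ι → ι → R) : Matrix ι ι R →ₗ[R] Matrix ι ι R where
  toFun X := P * (of g ⊙ X) + (1 - P) * (of g ⊙ X)ᵀ
  map_add' X Y := by simp only [hadamard_add, transpose_add, mul_add]; abel
  map_smul' c X := by simp [hadamard_smul, transpose_smul, smul_add]

theorem standardJordanMap_single (P : Matrix ι ι R) (g : ι → ι → R) (i j : ι) :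
    standardJordanMap P g (single i j 1) =
      P * single i j (g i j) + (1 - P) * single j i (g i j) := by
  have hg : of g ⊙ single i j 1 = single i j (g i j) := by
    ext a b
    by_cases h : i = a ∧ j = b
    · obtain ⟨rfl, rfl⟩ := h; simp [hadamard_apply]
    · simp [hadamard_apply, single_apply_of_ne (h := h)]
  simp [standardJordanMap, hg, transpose_single]

end StandardJordanMap

theorem diagonal_mul_single [Fintype ι] {R : Type*} [Semiring R] (v : ι → R) (i j : ι) (c : R) :
    diagonal v * single i j c = single i j (v i * c) := by
  ext a b
  rcases eq_or_ne i a with rfl | hia <;> simp [diagonal_mul, single_apply, *]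

section Field

variable [Fintype ι] {K : Type*} [Field K]

theorem exists_units_mul_eq_mul_single {P : ι → Matrix ι ι K}
    (hP : ∀ i, IsIdempotentElem (P i)) (horth : Pairwise fun i j => P i * P j = 0)
    (hne : ∀ i, P i ≠ 0) :
    ∃ U : (Matrix ι ι K)ˣ, ∀ i, P i * (U : Matrix ι ι K) = U * single i i (1 : K) := by
  have hw (i : ι) : ∃ w, P i *ᵥ w ≠ 0 := by
    by_contra! h
    exact hne i (ext_of_mulVec_single fun j => by rw [h, zero_mulVec])
  choose w hw using hw
  -- the columns of `U` are nonzero vectors `vᵢ` in the ranges of the `P i`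
  set v : ι → ι → K := fun i => P i *ᵥ w i
  have hv (i j : ι) : P i *ᵥ v j = if i = j then v j else 0 := by
    split_ifs with hij
    · subst hij; simp only [v, mulVec_mulVec, (hP i).eq]
    · simp only [v, mulVec_mulVec, horth hij, zero_mulVec]
  have hind : LinearIndependent K v := by
    refine Fintype.linearIndependent_iff.mpr fun c hc i => ?_
    have h := congrArg (P i *ᵥ ·) hc
    simp only [mulVec_sum, mulVec_smul, hv, smul_ite, smul_zero, Finset.sum_ite_eq,
      Finset.mem_univ, if_true, mulVec_zero, smul_eq_zero] at h
    exact h.resolve_right (hw i)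
  refine ⟨(linearIndependent_cols_iff_isUnit (A := (of v)ᵀ)).mp hind |>.unit, fun i => ?_⟩
  ext a b
  rw [IsUnit.unit_spec, show (P i * (of v)ᵀ) a b = (P i *ᵥ v b) a from rfl, hv]
  by_cases hb : b = i
  · subst hb; simp
  · simp [Ne.symm hb, mul_single_apply_of_ne _ _ _ _ _ hb]

theorem eq_single_add_single_of_single_mul_add_mul_single [CharZero K] {M : Matrix ι ι K}
    {i j : ι} (hij : i ≠ j)
    (h : ∀ k, single k k 1 * M + M * single k k 1 =
      ((if k = i then 1 else 0) + (if k = j then 1 else 0) : K) • M) :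
    M = single i j (M i j) + single j i (M j i) := by
  ext a b
  have ha := congr_fun₂ (h a) a b
  have hb := congr_fun₂ (h b) a b
  rcases eq_or_ne a b with rfl | hab
  · simp only [Matrix.add_apply, single_mul_apply_same, mul_single_apply_same, one_mul, mul_one,
      Matrix.smul_apply, smul_eq_mul] at ha
    by_cases a = i <;> by_cases a = j <;> simp_all [single_apply]
  · simp only [Matrix.add_apply, single_mul_apply_same, mul_single_apply_of_ne _ _ _ _ _ hab.symm,
      single_mul_apply_of_ne _ _ _ _ _ hab, mul_single_apply_same, one_mul, add_zero, zero_add,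
      Matrix.smul_apply, smul_eq_mul] at ha hb
    by_cases h1 : i = a ∧ j = b
    · obtain ⟨rfl, rfl⟩ := h1; simp [hij]
    by_cases h2 : j = a ∧ i = b
    · obtain ⟨rfl, rfl⟩ := h2; simp [hij]
    rw [Matrix.add_apply, single_apply_of_ne (h := h1), single_apply_of_ne (h := h2), add_zero]
    obtain ⟨hai, haj⟩ | ⟨hbi, hbj⟩ : (a ≠ i ∧ a ≠ j) ∨ (b ≠ i ∧ b ≠ j) := by grind
    · simpa [hai, haj] using ha
    · simpa [hbi, hbj] using hb

end Field

namespace StructuralMatrixAlgebra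

section Coefficients

variable {K : Type*} [Field K] (ρ : ι → ι → Prop)

-- The coefficients `cᵢⱼ` and `dᵢⱼ` in `ψ(Eᵢⱼ) = cᵢⱼ Eᵢⱼ + dᵢⱼ Eⱼᵢ`.
def coeff (ψ : Matrix ι ι K → Matrix ι ι K) (i j : ι) : K := ψ (single i j 1) i j

def flipCoeff (ψ : Matrix ι ι K → Matrix ι ι K) (i j : ι) : K := ψ (single i j 1) j i

/-- `ψ` is multiplicative on every edge of the connected component of `i` in the comparability
graph of `ρ`. -/
def IsMultiplicativeAt (ψ : Matrix ι ι K → Matrix ι ι K) (i : ι) : Prop :=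
  ∀ a b, ρ a b → a ≠ b → EqvGen ρ i a → coeff ψ a b ≠ 0

open scoped Classical in
noncomputable def transitiveMap (ψ : Matrix ι ι K → Matrix ι ι K) (i j : ι) : K :=
  if IsMultiplicativeAt ρ ψ i then coeff ψ i j else flipCoeff ψ i j

open scoped Classical in
noncomputable def centralIdempotent (ψ : Matrix ι ι K → Matrix ι ι K) : Matrix ι ι K :=
  diagonal fun i => if IsMultiplicativeAt ρ ψ i then 1 else 0

variable {ρ}

theorem isMultiplicativeAt_iff_of_eqvGen {ψ : Matrix ι ι K → Matrix ι ι K} {i j : ι}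
    (h : EqvGen ρ i j) : IsMultiplicativeAt ρ ψ i ↔ IsMultiplicativeAt ρ ψ j :=
  ⟨fun hi a b hab hne hja => hi a b hab hne (.trans _ _ _ h hja),
    fun hj a b hab hne hia => hj a b hab hne (.trans _ _ _ (.symm _ _ h) hia)⟩

variable [Fintype ι]

theorem isIdempotentElem_centralIdempotent (ψ : Matrix ι ι K → Matrix ι ι K) :
    IsIdempotentElem (centralIdempotent ρ ψ) := by
  rw [IsIdempotentElem, centralIdempotent, diagonal_mul_diagonal]
  congr 1
  ext i
  split_ifs <;> simp

variable [IsPreorder ι ρ]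

theorem centralIdempotent_mem (ψ : Matrix ι ι K → Matrix ι ι K) :
    centralIdempotent ρ ψ ∈ structuralMatrixAlgebra K ρ :=
  diagonal_mem_structuralMatrixAlgebra _

theorem centralIdempotent_mul_comm (ψ : Matrix ι ι K → Matrix ι ι K) {Y : Matrix ι ι K}
    (hY : Y ∈ structuralMatrixAlgebra K ρ) :
    centralIdempotent ρ ψ * Y = Y * centralIdempotent ρ ψ :=
  diagonal_mul_eq_mul_diagonal (fun i j hij => by
    have := isMultiplicativeAt_iff_of_eqvGen (ψ := ψ) (.rel _ _ hij)
    split_ifs <;> tauto) hY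

end Coefficients

variable [Fintype ι] {K : Type*} [Field K] (ρ : ι → ι → Prop) [IsPreorder ι ρ]

structure IsDiagFixingJordanEmbedding (ψ : Matrix ι ι K → Matrix ι ι K) : Prop
    extends IsJordanHomOn (structuralMatrixAlgebra K ρ) ψ where
  eq_zero_of_map_eq_zero : ∀ X ∈ structuralMatrixAlgebra K ρ, ψ X = 0 → X = 0
  map_single_self : ∀ i, ψ (single i i 1) = single i i 1

variable {ρ}

theorem exists_units_isDiagFixingJordanEmbedding [CharZero K] {φ : Matrix ι ι K → Matrix ι ι K}
    (hφ : IsJordanHomOn (structuralMatrixAlgebra K ρ) φ)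
    (hinj : Set.InjOn φ (structuralMatrixAlgebra K ρ)) :
    ∃ (U : (Matrix ι ι K)ˣ) (ψ : Matrix ι ι K → Matrix ι ι K),
      IsDiagFixingJordanEmbedding ρ ψ ∧
        ∀ X, φ X = (U : Matrix ι ι K) * ψ X * (↑U⁻¹ : Matrix ι ι K) := by
  have hmem (i : ι) := single_mem_structuralMatrixAlgebra (R := K) (refl (r := ρ) i) 1
  have hidem (i : ι) : IsIdempotentElem (φ (single i i 1)) := by
    rw [IsIdempotentElem, ← hφ.map_mul_self _ (hmem i), single_mul_single_same, mul_one]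
  have horth : Pairwise fun i j => φ (single i i 1) * φ (single j j 1) = 0 := fun i j hij => by
    -- `Matrix` is a type synonym, so the instance for functions has to be transferred by hand
    have : IsAddTorsionFree (Matrix ι ι K) := inferInstanceAs (IsAddTorsionFree (ι → ι → K))
    refine (hidem i).mul_eq_zero_of_anticommute ?_
    rw [← hφ.map_mul_add_mul (hmem i) (hmem j)]
    simp [hij, hij.symm, hφ.map_zero]
  have hne (i : ι) : φ (single i i 1) ≠ 0 := fun h => by
    simpa using congr_fun₂ (hinj (hmem i) (zero_mem _) (h.trans hφ.map_zero.symm)) i i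
  obtain ⟨U, hU⟩ := exists_units_mul_eq_mul_single hidem horth hne
  refine ⟨U, _, ⟨hφ.conj U, fun X hX h => ?_, fun i => ?_⟩, fun X => ?_⟩
  · rw [Units.mul_left_eq_zero, Units.mul_right_eq_zero] at h
    exact hinj hX (zero_mem _) (h.trans hφ.map_zero.symm)
  · rw [mul_assoc, hU i, ← mul_assoc, Units.inv_mul, one_mul]
  · simp [mul_assoc]

namespace IsDiagFixingJordanEmbedding

variable {ψ : Matrix ι ι K → Matrix ι ι K} (hψ : IsDiagFixingJordanEmbedding ρ ψ)
include hψ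

theorem map_single_mul_add {i j k l : ι} (hij : ρ i j) (hkl : ρ k l) :
    ψ (single i j 1 * single k l 1 + single k l 1 * single i j 1) =
      ψ (single i j 1) * ψ (single k l 1) + ψ (single k l 1) * ψ (single i j 1) :=
  hψ.map_mul_add_mul (single_mem_structuralMatrixAlgebra hij 1)
    (single_mem_structuralMatrixAlgebra hkl 1)

theorem transitiveMap_self (i : ι) : transitiveMap ρ ψ i i = 1 := by
  simp [transitiveMap, coeff, flipCoeff, hψ.map_single_self]

variable [CharZero K]

theorem map_single {i j : ι} (hij : ρ i j) (hne : i ≠ j) :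
    ψ (single i j 1) = single i j (coeff ψ i j) + single j i (flipCoeff ψ i j) := by
  refine eq_single_add_single_of_single_mul_add_mul_single hne fun k => ?_
  have h := hψ.map_single_mul_add (refl k) hij
  rw [hψ.map_single_self] at h
  rw [← h, ← hψ.map_smul _ _ (single_mem_structuralMatrixAlgebra hij 1)]
  congr 1
  rcases eq_or_ne k i with rfl | hki
  · simp [hne, hne.symm]
  rcases eq_or_ne k j with rfl | hkj
  · simp [hki]
  · simp [hki, hkj, hkj.symm]

theorem coeff_eq_zero_or_flipCoeff_eq_zero {i j : ι} (hij : ρ i j) (hne : i ≠ j) :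
    coeff ψ i j = 0 ∨ flipCoeff ψ i j = 0 := by
  simpa [hψ.map_single hij hne, add_mul, mul_add, hne.symm, hψ.map_zero] using
    congr_fun₂ (hψ.map_mul_self _ (single_mem_structuralMatrixAlgebra hij 1)) i i

theorem coeff_eq_zero_iff {i j : ι} (hij : ρ i j) (hne : i ≠ j) :
    coeff ψ i j = 0 ↔ flipCoeff ψ i j ≠ 0 := by
  refine ⟨fun hc hd => ?_, (hψ.coeff_eq_zero_or_flipCoeff_eq_zero hij hne).resolve_right⟩
  have h := hψ.eq_zero_of_map_eq_zero _ (single_mem_structuralMatrixAlgebra hij 1) <| by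
    rw [hψ.map_single hij hne, hc, hd, single_zero, single_zero, add_zero]
  simpa using congr_fun₂ h i j

theorem coeff_trans {i j k : ι} (hij : ρ i j) (hjk : ρ j k) (hij' : i ≠ j) (hjk' : j ≠ k)
    (hik' : i ≠ k) :
    coeff ψ i k = coeff ψ i j * coeff ψ j k ∧
      flipCoeff ψ i k = flipCoeff ψ i j * flipCoeff ψ j k := by
  have h := hψ.map_single_mul_add hij hjk
  simp only [hψ.map_single hij hij', hψ.map_single hjk hjk',
    hψ.map_single (_root_.trans hij hjk) hik', mul_add, add_mul, single_mul_single_same, mul_one,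
    single_mul_single_of_ne, ne_eq, hij', hjk', hik', hij'.symm, hjk'.symm, hik'.symm,
    not_false_eq_true, add_zero, zero_add] at h
  exact ⟨by simpa [hik'] using congr_fun₂ h i k, by simpa [hik', mul_comm] using congr_fun₂ h k i⟩

theorem coeff_mul_coeff_add_flipCoeff_mul_flipCoeff {i j : ι} (hij : ρ i j) (hji : ρ j i)
    (hne : i ≠ j) :
    coeff ψ i j * coeff ψ j i + flipCoeff ψ i j * flipCoeff ψ j i = 1 := by
  have h := congr_fun₂ (hψ.map_single_mul_add hij hji) i i
  simp only [single_mul_single_same, mul_one, hψ.map_single_self, hψ.map_single hij hne,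
    hψ.map_single hji hne.symm, hψ.map_add _ (single_mem_structuralMatrixAlgebra (refl i) 1) _
      (single_mem_structuralMatrixAlgebra (refl j) 1),
    Matrix.add_apply, single_apply_same, single_apply_of_ne, single_mul_single_of_ne, mul_add,
    add_mul, ne_eq, hne, hne.symm, and_self, not_false_eq_true, add_zero, zero_add] at h
  linear_combination -h

theorem flipCoeff_mul_coeff_of_source_eq {i j k : ι} (hij : ρ i j) (hik : ρ i k) (hij' : i ≠ j)
    (hik' : i ≠ k) (hjk' : j ≠ k) :
    flipCoeff ψ i j * coeff ψ i k = 0 ∧ coeff ψ i j * flipCoeff ψ i k = 0 := by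
  have h := hψ.map_single_mul_add hij hik
  simp only [hψ.map_zero, hψ.map_single hij hij', hψ.map_single hik hik', mul_add, add_mul,
    single_mul_single_same, single_mul_single_of_ne, ne_eq, hij', hjk', hik', hij'.symm,
    hjk'.symm, hik'.symm, not_false_eq_true, add_zero, zero_add] at h
  exact ⟨by simpa [hjk'] using (congr_fun₂ h j k).symm,
    by simpa [hjk', mul_comm] using (congr_fun₂ h k j).symm⟩

theorem coeff_mul_flipCoeff_of_target_eq {i j k : ι} (hij : ρ i j) (hkj : ρ k j) (hij' : i ≠ j)
    (hkj' : k ≠ j) (hik' : i ≠ k) :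
    coeff ψ i j * flipCoeff ψ k j = 0 ∧ flipCoeff ψ i j * coeff ψ k j = 0 := by
  have h := hψ.map_single_mul_add hij hkj
  simp only [hψ.map_zero, hψ.map_single hij hij', hψ.map_single hkj hkj', mul_add, add_mul,
    single_mul_single_same, single_mul_single_of_ne, ne_eq, hij', hkj', hik', hij'.symm,
    hkj'.symm, hik'.symm, not_false_eq_true, add_zero, zero_add] at h
  exact ⟨by simpa [hik'] using (congr_fun₂ h i k).symm,
    by simpa [hik', mul_comm] using (congr_fun₂ h k i).symm⟩

theorem coeff_eq_zero_of_coeff_swap_eq_zero {i j : ι} (hij : ρ i j) (hji : ρ j i) (hne : i ≠ j)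
    (h : coeff ψ j i = 0) : coeff ψ i j = 0 := by
  have h1 := hψ.coeff_mul_coeff_add_flipCoeff_mul_flipCoeff hij hji hne
  rw [h, mul_zero, zero_add] at h1
  exact (hψ.coeff_eq_zero_iff hij hne).mpr (left_ne_zero_of_mul_eq_one h1)

theorem coeff_eq_zero_iff_of_source_eq {i j k : ι} (hij : ρ i j) (hik : ρ i k) (hij' : i ≠ j)
    (hik' : i ≠ k) : coeff ψ i j = 0 ↔ coeff ψ i k = 0 := by
  rcases eq_or_ne j k with rfl | hjk'
  · rfl
  have h := hψ.flipCoeff_mul_coeff_of_source_eq hij hik hij' hik' hjk'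
  simp only [mul_eq_zero] at h
  have := hψ.coeff_eq_zero_iff hij hij'
  have := hψ.coeff_eq_zero_iff hik hik'
  tauto

theorem coeff_eq_zero_iff_of_target_eq {i j k : ι} (hij : ρ i j) (hkj : ρ k j) (hij' : i ≠ j)
    (hkj' : k ≠ j) : coeff ψ i j = 0 ↔ coeff ψ k j = 0 := by
  rcases eq_or_ne i k with rfl | hik'
  · rfl
  have h := hψ.coeff_mul_flipCoeff_of_target_eq hij hkj hij' hkj' hik'
  simp only [mul_eq_zero] at h
  have := hψ.coeff_eq_zero_iff hij hij'
  have := hψ.coeff_eq_zero_iff hkj hkj'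
  tauto

theorem coeff_eq_zero_iff_of_target_eq_source {i j k : ι} (hij : ρ i j) (hjk : ρ j k)
    (hij' : i ≠ j) (hjk' : j ≠ k) : coeff ψ i j = 0 ↔ coeff ψ j k = 0 := by
  rcases eq_or_ne i k with rfl | hik'
  · exact ⟨hψ.coeff_eq_zero_of_coeff_swap_eq_zero hjk hij hjk',
      hψ.coeff_eq_zero_of_coeff_swap_eq_zero hij hjk hij'⟩
  obtain ⟨hc, hd⟩ := hψ.coeff_trans hij hjk hij' hjk' hik'
  have h := hψ.coeff_eq_zero_iff (_root_.trans hij hjk) hik'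
  rw [hc, hd, mul_eq_zero, Ne, mul_eq_zero] at h
  have := hψ.coeff_eq_zero_iff hij hij'
  have := hψ.coeff_eq_zero_iff hjk hjk'
  tauto

theorem coeff_eq_zero_iff_of_adjacent {i j p q : ι} (hij : ρ i j) (hpq : ρ p q) (hij' : i ≠ j)
    (hpq' : p ≠ q) (h : i = p ∨ i = q ∨ j = p ∨ j = q) : coeff ψ i j = 0 ↔ coeff ψ p q = 0 := by
  rcases h with rfl | rfl | rfl | rfl
  · exact hψ.coeff_eq_zero_iff_of_source_eq hij hpq hij' hpq'
  · exact (hψ.coeff_eq_zero_iff_of_target_eq_source hpq hij hpq' hij').symm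
  · exact hψ.coeff_eq_zero_iff_of_target_eq_source hij hpq hij' hpq'
  · exact hψ.coeff_eq_zero_iff_of_target_eq hij hpq hij' hpq'

theorem coeff_eq_zero_iff_of_reflTransGen {i j y : ι} (hij : ρ i j) (hij' : i ≠ j)
    (hy : ReflTransGen (SymmGen ρ) i y) {p q : ι} (hpq : ρ p q) (hpq' : p ≠ q)
    (hyp : y = p ∨ y = q) : coeff ψ i j = 0 ↔ coeff ψ p q = 0 := by
  induction hy generalizing p q with
  | refl => exact hψ.coeff_eq_zero_iff_of_adjacent hij hpq hij' hpq' (by tauto)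
  | @tail b y _ hby ih =>
    rcases eq_or_ne b y with rfl | hby'
    · exact ih hpq hpq' hyp
    rcases hby with hby | hyb
    · exact (ih hby hby' (.inl rfl)).trans
        (hψ.coeff_eq_zero_iff_of_adjacent hby hpq hby' hpq' (by tauto))
    · exact (ih hyb hby'.symm (.inr rfl)).trans
        (hψ.coeff_eq_zero_iff_of_adjacent hyb hpq hby'.symm hpq' (by tauto))

theorem coeff_eq_zero_of_not_isMultiplicativeAt {i j : ι} (hij : ρ i j) (hne : i ≠ j)
    (hi : ¬ IsMultiplicativeAt ρ ψ i) : coeff ψ i j = 0 := by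
  simp only [IsMultiplicativeAt, not_forall, not_not] at hi
  obtain ⟨a, b, hab, hab', hia, hc⟩ := hi
  rw [← EqvGen.reflTransGen_symmGen] at hia
  exact (hψ.coeff_eq_zero_iff_of_reflTransGen hij hne hia hab hab' (.inl rfl)).mpr hc

theorem flipCoeff_eq_zero_of_isMultiplicativeAt {i j : ι} (hij : ρ i j) (hne : i ≠ j)
    (hi : IsMultiplicativeAt ρ ψ i) : flipCoeff ψ i j = 0 :=
  (hψ.coeff_eq_zero_or_flipCoeff_eq_zero hij hne).resolve_left (hi i j hij hne (.refl i))

theorem transitiveMap_ne_zero {i j : ι} (hij : ρ i j) : transitiveMap ρ ψ i j ≠ 0 := by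
  rcases eq_or_ne i j with rfl | hne
  · simp [hψ.transitiveMap_self]
  unfold transitiveMap
  split_ifs with hi
  · exact hi i j hij hne (.refl i)
  · exact (hψ.coeff_eq_zero_iff hij hne).mp (hψ.coeff_eq_zero_of_not_isMultiplicativeAt hij hne hi)

theorem transitiveMap_mul {i j k : ι} (hij : ρ i j) (hjk : ρ j k) :
    transitiveMap ρ ψ i j * transitiveMap ρ ψ j k = transitiveMap ρ ψ i k := by
  rcases eq_or_ne i j with rfl | hij'
  · rw [hψ.transitiveMap_self, one_mul]
  rcases eq_or_ne j k with rfl | hjk'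
  · rw [hψ.transitiveMap_self, mul_one]
  have hj := isMultiplicativeAt_iff_of_eqvGen (ψ := ψ) (.rel _ _ hij)
  rcases eq_or_ne i k with rfl | hik'
  · have h := hψ.coeff_mul_coeff_add_flipCoeff_mul_flipCoeff hij hjk hij'
    rw [hψ.transitiveMap_self]
    by_cases hi : IsMultiplicativeAt ρ ψ i
    · simpa [transitiveMap, hi, hj.mp hi,
        hψ.flipCoeff_eq_zero_of_isMultiplicativeAt hij hij' hi] using h
    · simpa [transitiveMap, hi, mt hj.mpr hi,
        hψ.coeff_eq_zero_of_not_isMultiplicativeAt hij hij' hi] using h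
  obtain ⟨hc, hd⟩ := hψ.coeff_trans hij hjk hij' hjk' hik'
  by_cases hi : IsMultiplicativeAt ρ ψ i
  · simp [transitiveMap, hi, hj.mp hi, hc]
  · simp [transitiveMap, hi, mt hj.mpr hi, hd]

theorem map_single_eq {i j : ι} (hij : ρ i j) :
    ψ (single i j 1) = centralIdempotent ρ ψ * single i j (transitiveMap ρ ψ i j) +
      (1 - centralIdempotent ρ ψ) * single j i (transitiveMap ρ ψ i j) := by
  rw [sub_mul, one_mul, centralIdempotent, diagonal_mul_single, diagonal_mul_single]
  rcases eq_or_ne i j with rfl | hne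
  · simp [hψ.map_single_self, hψ.transitiveMap_self]
  have hj := isMultiplicativeAt_iff_of_eqvGen (ψ := ψ) (.rel _ _ hij)
  rw [hψ.map_single hij hne]
  by_cases hi : IsMultiplicativeAt ρ ψ i
  · simp [transitiveMap, hi, hj.mp hi, hψ.flipCoeff_eq_zero_of_isMultiplicativeAt hij hne hi]
  · simp [transitiveMap, hi, mt hj.mpr hi, hψ.coeff_eq_zero_of_not_isMultiplicativeAt hij hne hi]

theorem eq_standardJordanMap {X : Matrix ι ι K} (hX : X ∈ structuralMatrixAlgebra K ρ) :
    ψ X = standardJordanMap (centralIdempotent ρ ψ) (transitiveMap ρ ψ) X :=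
  hψ.eqOn_of_map_single _ (fun i j hij => by
    rw [hψ.map_single_eq hij, standardJordanMap_single]) hX

end IsDiagFixingJordanEmbedding

end StructuralMatrixAlgebra

open StructuralMatrixAlgebra in
theorem stmt_2 (n : ℕ) (ρ : Fin n → Fin n → Prop)
    (hrefl : ∀ i, ρ i i) (htrans : ∀ i j k, ρ i j → ρ j k → ρ i k)
    (A : Set (Matrix (Fin n) (Fin n) ℂ))
    (hA : A = {X : Matrix (Fin n) (Fin n) ℂ | ∀ i j, ¬ ρ i j → X i j = 0})
    (φ : Matrix (Fin n) (Fin n) ℂ → Matrix (Fin n) (Fin n) ℂ)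
    (hinj : Set.InjOn φ A)
    (hadd : ∀ X ∈ A, ∀ Y ∈ A, φ (X + Y) = φ X + φ Y)
    (hsmul : ∀ (α : ℂ), ∀ X ∈ A, φ (α • X) = α • φ X)
    (hjordan : ∀ X ∈ A, φ (X * X) = φ X * φ X) :
    ∃ (S P : Matrix (Fin n) (Fin n) ℂ) (g : Fin n → Fin n → ℂ),
      IsUnit S ∧
      P ∈ A ∧ P * P = P ∧ (∀ Y ∈ A, P * Y = Y * P) ∧
      (∀ i j, ρ i j → g i j ≠ 0) ∧
      (∀ i j k, ρ i j → ρ j k → g i j * g j k = g i k) ∧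
      (∀ X ∈ A, φ X =
        S * (P * (Matrix.of fun i j => g i j * X i j)
          + (1 - P) * (Matrix.of fun i j => g i j * X i j)ᵀ) * S⁻¹) := by
  subst hA
  have : IsPreorder (Fin n) ρ := { refl := hrefl, trans := htrans }
  obtain ⟨U, ψ, hψ, hφψ⟩ := exists_units_isDiagFixingJordanEmbedding
    ⟨hadd, hsmul, hjordan⟩ hinj
  refine ⟨U, centralIdempotent ρ ψ, transitiveMap ρ ψ, U.isUnit, centralIdempotent_mem _,
    (isIdempotentElem_centralIdempotent _).eq, fun Y hY => centralIdempotent_mul_comm _ hY,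
    fun i j hij => hψ.transitiveMap_ne_zero hij,
    fun i j k hij hjk => hψ.transitiveMap_mul hij hjk, fun X hX => ?_⟩
  rw [hφψ X, ← coe_units_inv, hψ.eq_standardJordanMap hX]
  rfl
end

section
/- Let A_ρ ⊆ M_n be a structural matrix algebra and let ℱ ⊆ A_ρ be a commuting family of diagonalizable matrices (every two members of ℱ commute and each member is diagonalizable over ℂ). Then there exists an invertible matrix S belonging to A_ρ such that S⁻¹ F S is a diagonal matrix for every F ∈ ℱ. -/
open Matrix Polynomial Module


lemma rado {V : Type*} [AddCommGroup V] [Module ℂ V] [FiniteDimensional ℂ V] [DecidableEq V]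
    {N : ℕ} (E : Fin N → Finset V)
    (hall : ∀ T : Finset (Fin N),
      T.card ≤ finrank ℂ (Submodule.span ℂ (↑(T.biUnion E) : Set V))) :
    ∃ v : Fin N → V, (∀ j, v j ∈ E j) ∧ LinearIndependent ℂ v := by
  classical
  generalize hM : (∑ j, (E j).card) = M
  induction M using Nat.strong_induction_on generalizing E with
  | _ M ih =>
  by_cases hbig : ∃ j0, 1 < (E j0).card
  · obtain ⟨j0, hj0⟩ := hbig
    obtain ⟨x, hx, y, hy, hxy⟩ := Finset.one_lt_card.mp hj0
    set E1 := Function.update E j0 ((E j0).erase x) with hE1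
    set E2 := Function.update E j0 ((E j0).erase y) with hE2
    have hsub1 : ∀ j, E1 j ⊆ E j := by
      intro j; by_cases h : j = j0
      · subst h; simp only [hE1, Function.update_self]; exact Finset.erase_subset _ _
      · simp [hE1, Function.update_of_ne h]
    have hsub2 : ∀ j, E2 j ⊆ E j := by
      intro j; by_cases h : j = j0
      · subst h; simp only [hE2, Function.update_self]; exact Finset.erase_subset _ _
      · simp [hE2, Function.update_of_ne h]
    have hcard1 : ∑ j, (E1 j).card < M := by
      rw [← hM]
      refine Finset.sum_lt_sum (fun j _ => Finset.card_le_card (hsub1 j)) ⟨j0, Finset.mem_univ _, ?_⟩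
      simp only [hE1, Function.update_self]
      exact Finset.card_erase_lt_of_mem hx
    have hcard2 : ∑ j, (E2 j).card < M := by
      rw [← hM]
      refine Finset.sum_lt_sum (fun j _ => Finset.card_le_card (hsub2 j)) ⟨j0, Finset.mem_univ _, ?_⟩
      simp only [hE2, Function.update_self]
      exact Finset.card_erase_lt_of_mem hy
    by_cases h1 : ∀ T : Finset (Fin N),
        T.card ≤ finrank ℂ (Submodule.span ℂ (↑(T.biUnion E1) : Set V))
    · obtain ⟨v, hv, hli⟩ := ih _ hcard1 E1 h1 rfl
      exact ⟨v, fun j => hsub1 j (hv j), hli⟩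
    by_cases h2 : ∀ T : Finset (Fin N),
        T.card ≤ finrank ℂ (Submodule.span ℂ (↑(T.biUnion E2) : Set V))
    · obtain ⟨v, hv, hli⟩ := ih _ hcard2 E2 h2 rfl
      exact ⟨v, fun j => hsub2 j (hv j), hli⟩
    exfalso
    push_neg at h1 h2
    obtain ⟨P, hP⟩ := h1
    obtain ⟨Q, hQ⟩ := h2
    have hj0P : j0 ∈ P := by
      by_contra h
      have heq : P.biUnion E1 = P.biUnion E := by
        refine Finset.biUnion_congr rfl (fun j hj => ?_)
        rw [hE1, Function.update_of_ne (by rintro rfl; exact h hj)]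
      rw [heq] at hP
      exact absurd (hall P) (not_le.mpr hP)
    have hj0Q : j0 ∈ Q := by
      by_contra h
      have heq : Q.biUnion E2 = Q.biUnion E := by
        refine Finset.biUnion_congr rfl (fun j hj => ?_)
        rw [hE2, Function.update_of_ne (by rintro rfl; exact h hj)]
      rw [heq] at hQ
      exact absurd (hall Q) (not_le.mpr hQ)
    set pA := Submodule.span ℂ (↑(P.biUnion E1) : Set V) with hpA
    set pB := Submodule.span ℂ (↑(Q.biUnion E2) : Set V) with hpB
    have hsup : (P ∪ Q).card ≤ finrank ℂ ↥(pA ⊔ pB) := by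
      refine le_trans (hall (P ∪ Q)) (Submodule.finrank_mono ?_)
      rw [hpA, hpB, ← Submodule.span_union]
      refine Submodule.span_mono ?_
      intro z hz
      rw [Finset.mem_coe, Finset.mem_biUnion] at hz
      obtain ⟨j, hjPQ, hzj⟩ := hz
      by_cases hj : j = j0
      · have hzj0 : z ∈ E j0 := by rwa [hj] at hzj
        by_cases hzx : z = x
        · refine Set.mem_union_right _ ?_
          rw [Finset.mem_coe, Finset.mem_biUnion]
          refine ⟨j0, hj0Q, ?_⟩
          simp only [hE2, Function.update_self, Finset.mem_erase]
          exact ⟨by rw [hzx]; exact hxy, hzj0⟩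
        · refine Set.mem_union_left _ ?_
          rw [Finset.mem_coe, Finset.mem_biUnion]
          refine ⟨j0, hj0P, ?_⟩
          simp only [hE1, Function.update_self, Finset.mem_erase]
          exact ⟨hzx, hzj0⟩
      · rcases Finset.mem_union.mp hjPQ with hjP | hjQ
        · refine Set.mem_union_left _ ?_
          rw [Finset.mem_coe, Finset.mem_biUnion]
          exact ⟨j, hjP, by rwa [hE1, Function.update_of_ne hj]⟩
        · refine Set.mem_union_right _ ?_
          rw [Finset.mem_coe, Finset.mem_biUnion]
          exact ⟨j, hjQ, by rwa [hE2, Function.update_of_ne hj]⟩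
    have hinf : (P ∩ Q).card ≤ finrank ℂ ↥(pA ⊓ pB) + 1 := by
      have hcard : ((P ∩ Q).erase j0).card + 1 = (P ∩ Q).card :=
        Finset.card_erase_add_one (Finset.mem_inter.mpr ⟨hj0P, hj0Q⟩)
      have h := hall ((P ∩ Q).erase j0)
      have hle : Submodule.span ℂ (↑(((P ∩ Q).erase j0).biUnion E) : Set V) ≤ pA ⊓ pB := by
        refine le_inf ?_ ?_
        · rw [hpA, Submodule.span_le]
          intro z hz
          rw [Finset.mem_coe, Finset.mem_biUnion] at hz
          obtain ⟨j, hj, hzj⟩ := hz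
          have hjne : j ≠ j0 := (Finset.mem_erase.mp hj).1
          have hjP : j ∈ P := (Finset.mem_inter.mp (Finset.mem_erase.mp hj).2).1
          refine Submodule.subset_span ?_
          rw [Finset.mem_coe, Finset.mem_biUnion]
          exact ⟨j, hjP, by rwa [hE1, Function.update_of_ne hjne]⟩
        · rw [hpB, Submodule.span_le]
          intro z hz
          rw [Finset.mem_coe, Finset.mem_biUnion] at hz
          obtain ⟨j, hj, hzj⟩ := hz
          have hjne : j ≠ j0 := (Finset.mem_erase.mp hj).1
          have hjQ : j ∈ Q := (Finset.mem_inter.mp (Finset.mem_erase.mp hj).2).2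
          refine Submodule.subset_span ?_
          rw [Finset.mem_coe, Finset.mem_biUnion]
          exact ⟨j, hjQ, by rwa [hE2, Function.update_of_ne hjne]⟩
      have := Submodule.finrank_mono hle
      omega
    have heq := Submodule.finrank_sup_add_finrank_inf_eq pA pB
    have hcu := Finset.card_union_add_card_inter P Q
    omega
  · push_neg at hbig
    have hone : ∀ j, ∃ z, E j = {z} := by
      intro j
      refine Finset.card_eq_one.mp (le_antisymm (hbig j) ?_)
      have h := hall {j}
      rw [Finset.singleton_biUnion] at h
      by_contra hc
      have : E j = ∅ := Finset.card_eq_zero.mp (by omega)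
      rw [this] at h
      simp at h
    choose v hv using hone
    refine ⟨v, fun j => by rw [hv j]; exact Finset.mem_singleton_self _, ?_⟩
    rw [linearIndependent_iff_card_eq_finrank_span]
    have hsub : (↑(Finset.univ.biUnion E) : Set V) ⊆ Set.range v := by
      intro z hz
      rw [Finset.mem_coe, Finset.mem_biUnion] at hz
      obtain ⟨j, _, hzj⟩ := hz
      rw [hv j, Finset.mem_singleton] at hzj
      exact ⟨j, hzj.symm⟩
    have hge : N ≤ Set.finrank ℂ (Set.range v) := by
      refine le_trans ?_ (Submodule.finrank_mono (Submodule.span_mono hsub))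
      simpa using hall Finset.univ
    have hle : Set.finrank ℂ (Set.range v) ≤ N := by
      have h1 := finrank_span_le_card (R := ℂ) (Set.range v)
      have h2 : (Set.range v).toFinset.card ≤ N := by
        rw [Set.toFinset_range]
        exact le_trans (Finset.card_image_le) (by simp)
      exact le_trans h1 h2
    simp only [Fintype.card_fin]
    omega


-- conjugation compatible with aeval
lemma aeval_conj {n : ℕ} (P D : Matrix (Fin n) (Fin n) ℂ) (hP : IsUnit P) (q : ℂ[X]) :
    aeval (P * D * P⁻¹) q = P * aeval D q * P⁻¹ := by
  have hdet : IsUnit P.det := (Matrix.isUnit_iff_isUnit_det P).mp hP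
  have h1 : P⁻¹ * P = 1 := Matrix.nonsing_inv_mul P hdet
  have h2 : P * P⁻¹ = 1 := Matrix.mul_nonsing_inv P hdet
  induction q using Polynomial.induction_on with
  | C a =>
    simp only [aeval_C, Algebra.algebraMap_eq_smul_one]
    rw [Matrix.mul_smul, mul_one, Matrix.smul_mul, h2]
  | add p q hp hq =>
    rw [map_add, map_add, hp, hq, Matrix.mul_add, Matrix.add_mul]
  | monomial k a hk =>
    have e : (C a * X ^ (k+1) : ℂ[X]) = (C a * X ^ k) * X := by ring
    rw [e]
    rw [_root_.map_mul (aeval (P * D * P⁻¹)) (C a * X ^ k) Polynomial.X]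
    rw [_root_.map_mul (aeval D) (C a * X ^ k) Polynomial.X]
    rw [aeval_X, aeval_X, hk]
    simp only [Matrix.mul_assoc]
    rw [← Matrix.mul_assoc P⁻¹ P (D * P⁻¹), h1, Matrix.one_mul]

-- the characteristic-like product annihilates X
lemma annihilate {n : ℕ} (X : Matrix (Fin n) (Fin n) ℂ)
    (P D : Matrix (Fin n) (Fin n) ℂ) (hP : IsUnit P) (hD : D.IsDiag)
    (hX : X = P * D * P⁻¹) :
    aeval X (∏ ν ∈ Finset.univ.image (fun i => D i i), (Polynomial.X - C ν)) = 0 := by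
  set s := Finset.univ.image (fun i => D i i) with hs
  set p : ℂ[X] := ∏ ν ∈ s, (Polynomial.X - C ν) with hp
  rw [hX, aeval_conj P D hP]
  have hDdiag : Matrix.diagonal D.diag = D := hD.diagonal_diag
  have : aeval D p = 0 := by
    rw [← hDdiag, ← Matrix.diagonalAlgHom_apply ℂ, Polynomial.aeval_algHom_apply]
    have hz : aeval D.diag p = 0 := by
      funext i
      rw [hp, map_prod]
      rw [show ((∏ ν ∈ s, aeval D.diag (Polynomial.X - C ν)) i)
          = ∏ ν ∈ s, ((aeval D.diag (Polynomial.X - C ν)) i) from Finset.prod_apply i s _]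
      refine Finset.prod_eq_zero (Finset.mem_image_of_mem (fun i => D i i) (Finset.mem_univ i)) ?_
      simp [Matrix.diag]
    rw [hz, map_zero]
  rw [this, Matrix.mul_zero, Matrix.zero_mul]

lemma spectral_decomp {n : ℕ} (X : Matrix (Fin n) (Fin n) ℂ)
    (P D : Matrix (Fin n) (Fin n) ℂ) (hP : IsUnit P) (hD : D.IsDiag)
    (hX : X = P * D * P⁻¹)
    (U : Submodule ℂ (Fin n → ℂ)) (hU : ∀ v ∈ U, X *ᵥ v ∈ U)
    {v : Fin n → ℂ} (hv : v ∈ U) :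
    ∃ (s : Finset ℂ) (w : ℂ → (Fin n → ℂ)),
      v = ∑ μ ∈ s, w μ ∧ ∀ μ ∈ s, w μ ∈ U ∧ X *ᵥ (w μ) = μ • w μ := by
  classical
  rcases isEmpty_or_nonempty (Fin n) with hn | hn
  · refine ⟨∅, 0, ?_, by simp⟩
    simp only [Finset.sum_empty]
    exact Subsingleton.elim v 0
  set s := Finset.univ.image (fun i => D i i) with hs
  have hsne : s.Nonempty := (Finset.image_nonempty).mpr Finset.univ_nonempty
  set q : ℂ → ℂ[X] := fun μ => Lagrange.basis s id μ with hq
  -- invariance of U under polynomials of X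
  have hinv : ∀ (r : ℂ[X]) (u : Fin n → ℂ), u ∈ U → (aeval X r) *ᵥ u ∈ U := by
    intro r
    induction r using Polynomial.induction_on with
    | C a =>
      intro u hu
      rw [aeval_C, Algebra.algebraMap_eq_smul_one, Matrix.smul_mulVec,
        Matrix.one_mulVec]
      exact U.smul_mem a hu
    | add p q hp hq' =>
      intro u hu
      rw [map_add, Matrix.add_mulVec]
      exact U.add_mem (hp u hu) (hq' u hu)
    | monomial k a hk =>
      intro u hu
      have e : (C a * Polynomial.X ^ (k+1) : ℂ[X]) = (C a * Polynomial.X ^ k) * Polynomial.X := by ring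
      rw [e, _root_.map_mul (aeval X) (C a * Polynomial.X ^ k) Polynomial.X, aeval_X,
        ← Matrix.mulVec_mulVec]
      exact hk _ (hU u hu)
  refine ⟨s, fun μ => (aeval X (q μ)) *ᵥ v, ?_, ?_⟩
  · have hsum : ∑ μ ∈ s, q μ = 1 :=
      Lagrange.sum_basis (Set.injOn_id _) hsne
    have hms : (∑ μ ∈ s, aeval X (q μ)) *ᵥ v = ∑ μ ∈ s, (aeval X (q μ)) *ᵥ v :=
      map_sum (Matrix.mulVec.addMonoidHomLeft v) (fun μ => aeval X (q μ)) s
    show v = ∑ μ ∈ s, (aeval X (q μ)) *ᵥ v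
    rw [← hms, ← map_sum (aeval X) q s, hsum, _root_.map_one, Matrix.one_mulVec]
  · intro μ hμ
    refine ⟨hinv (q μ) v hv, ?_⟩
    -- key identity : (X - μ•1) * aeval X (q μ) = 0
    have hfact : (Polynomial.X - C μ) * q μ
        = C (∏ ν ∈ s.erase μ, (μ - ν)⁻¹) * ∏ ν ∈ s, (Polynomial.X - C ν) := by
      have hbasis : q μ = ∏ j ∈ s.erase μ, (C (μ - j)⁻¹ * (Polynomial.X - C j)) := rfl
      rw [hbasis, Finset.prod_mul_distrib, ← map_prod]
      rw [← mul_assoc, mul_comm (Polynomial.X - C μ), mul_assoc,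
        Finset.mul_prod_erase s (fun ν => Polynomial.X - C ν) hμ]
    have hzero : (X - μ • 1) * aeval X (q μ) = 0 := by
      have : (X - μ • 1) = aeval X (Polynomial.X - C μ) := by
        rw [map_sub, aeval_X, aeval_C, Algebra.algebraMap_eq_smul_one]
      rw [this, ← _root_.map_mul, hfact, _root_.map_mul, annihilate X P D hP hD hX,
        Matrix.mul_zero]
    have hXq : X * aeval X (q μ) = μ • aeval X (q μ) := by
      have := sub_eq_zero.mp (by rw [← Matrix.sub_mul]; exact hzero :
        X * aeval X (q μ) - (μ • 1) * aeval X (q μ) = 0)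
      rw [this, Matrix.smul_mul, Matrix.one_mul]
    rw [Matrix.mulVec_mulVec, hXq, Matrix.smul_mulVec]

lemma span_joint {n : ℕ} (F : Set (Matrix (Fin n) (Fin n) ℂ))
    (hcomm : ∀ X ∈ F, ∀ Y ∈ F, X * Y = Y * X)
    (hdiag : ∀ X ∈ F, ∃ P D : Matrix (Fin n) (Fin n) ℂ,
      IsUnit P ∧ D.IsDiag ∧ X = P * D * P⁻¹) :
    ∀ (k : ℕ) (U : Submodule ℂ (Fin n → ℂ)), Module.finrank ℂ U ≤ k →
      (∀ X ∈ F, ∀ v ∈ U, X *ᵥ v ∈ U) →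
      U ≤ Submodule.span ℂ {w | w ∈ U ∧ ∀ X ∈ F, ∃ μ : ℂ, X *ᵥ w = μ • w} := by
  intro k
  induction k with
  | zero =>
    intro U hU _
    have hbot : U = ⊥ := by
      rw [← Submodule.finrank_eq_zero (R := ℂ) (S := U)]
      omega
    rw [hbot]; exact bot_le
  | succ k ih =>
    intro U hUk hUinv
    by_cases hscal : ∀ X ∈ F, ∃ μ : ℂ, ∀ v ∈ U, X *ᵥ v = μ • v
    · intro v hv
      refine Submodule.subset_span ⟨hv, fun X hX => ?_⟩
      obtain ⟨μ, hμ⟩ := hscal X hX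
      exact ⟨μ, hμ v hv⟩
    · push_neg at hscal
      obtain ⟨X, hXF, hXns⟩ := hscal
      intro v hv
      obtain ⟨P, D, hP, hD, hXPD⟩ := hdiag X hXF
      obtain ⟨s, w, hsum, hw⟩ :=
        spectral_decomp X P D hP hD hXPD U (fun u hu => hUinv X hXF u hu) hv
      rw [hsum]
      refine Submodule.sum_mem _ (fun μ hμ => ?_)
      set Vμ : Submodule ℂ (Fin n → ℂ) :=
        U ⊓ LinearMap.ker (X.mulVecLin - μ • LinearMap.id) with hVμ
      have hmem : ∀ u, u ∈ Vμ ↔ (u ∈ U ∧ X *ᵥ u = μ • u) := by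
        intro u
        simp [hVμ, LinearMap.mem_ker, LinearMap.sub_apply, Matrix.mulVecLin_apply,
          sub_eq_zero]
      have hwμ : w μ ∈ Vμ := (hmem _).mpr ⟨(hw μ hμ).1, (hw μ hμ).2⟩
      have hVinv : ∀ Y ∈ F, ∀ u ∈ Vμ, Y *ᵥ u ∈ Vμ := by
        intro Y hY u hu
        rw [hmem] at hu ⊢
        refine ⟨hUinv Y hY u hu.1, ?_⟩
        rw [Matrix.mulVec_mulVec, hcomm X hXF Y hY, ← Matrix.mulVec_mulVec, hu.2,
          Matrix.mulVec_smul]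
      have hlt : Module.finrank ℂ Vμ ≤ k := by
        have hle : Vμ ≤ U := inf_le_left
        have hne : Vμ ≠ U := by
          intro h
          obtain ⟨v0, hv0U, hv0⟩ := hXns μ
          exact hv0 ((hmem v0).mp (h ▸ hv0U)).2
        have := Submodule.finrank_lt_finrank_of_lt (lt_of_le_of_ne hle hne)
        omega
      refine Submodule.span_mono (fun u hu => ?_) (ih Vμ hlt hVinv hwμ)
      exact ⟨((hmem u).mp hu.1).1, hu.2⟩

theorem stmt_3 (n : ℕ) (ρ : Fin n → Fin n → Prop)
    (hrefl : ∀ i, ρ i i) (htrans : ∀ i j k, ρ i j → ρ j k → ρ i k)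
    (A : Set (Matrix (Fin n) (Fin n) ℂ))
    (hA : A = {X : Matrix (Fin n) (Fin n) ℂ | ∀ i j, ¬ ρ i j → X i j = 0})
    (F : Set (Matrix (Fin n) (Fin n) ℂ))
    (hFA : F ⊆ A)
    (hcomm : ∀ X ∈ F, ∀ Y ∈ F, X * Y = Y * X)
    (hdiag : ∀ X ∈ F, ∃ P D : Matrix (Fin n) (Fin n) ℂ,
      IsUnit P ∧ D.IsDiag ∧ X = P * D * P⁻¹) :
    ∃ S : Matrix (Fin n) (Fin n) ℂ, S ∈ A ∧ IsUnit S ∧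
      ∀ X ∈ F, (S⁻¹ * X * S).IsDiag := by
  classical
  rcases Nat.eq_zero_or_pos n with hn | hn
  · subst hn
    refine ⟨1, ?_, isUnit_one, ?_⟩
    · rw [hA]; intro i; exact i.elim0
    · intro X _ i; exact i.elim0
  have hn' : Nonempty (Fin n) := ⟨⟨0, hn⟩⟩
  have hA' : ∀ X ∈ F, ∀ i j, ¬ ρ i j → X i j = 0 := fun X hX => by
    have h := hFA hX; rw [hA] at h; exact h
  set Uj : Fin n → Submodule ℂ (Fin n → ℂ) := fun j =>
    { carrier := {v | ∀ i, ¬ ρ i j → v i = 0}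
      add_mem' := by
        intro a b ha hb i hij
        simp only [Set.mem_setOf_eq] at ha hb
        simp only [Pi.add_apply, ha i hij, hb i hij, add_zero]
      zero_mem' := by intro i _; rfl
      smul_mem' := by
        intro c x hx i hij
        simp only [Set.mem_setOf_eq] at hx
        simp only [Pi.smul_apply, hx i hij, smul_zero] } with hUj
  have hUmem : ∀ j (v : Fin n → ℂ), v ∈ Uj j ↔ ∀ i, ¬ ρ i j → v i = 0 :=
    fun j v => Iff.rfl
  have hUinv : ∀ j, ∀ X ∈ F, ∀ v ∈ Uj j, X *ᵥ v ∈ Uj j := by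
    intro j X hX v hv
    rw [hUmem] at hv ⊢
    intro i hij
    rw [show (X *ᵥ v) i = ∑ k, X i k * v k by simp [Matrix.mulVec, dotProduct]]
    refine Finset.sum_eq_zero (fun k _ => ?_)
    by_cases hk : ρ k j
    · rw [hA' X hX i k (fun hik => hij (htrans i k j hik hk)), zero_mul]
    · rw [hv k hk, mul_zero]
  set JE : Fin n → Set (Fin n → ℂ) := fun j =>
    {w | w ∈ Uj j ∧ ∀ X ∈ F, ∃ μ : ℂ, X *ᵥ w = μ • w} with hJE
  have hspan : ∀ j, Uj j ≤ Submodule.span ℂ (JE j) := fun j =>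
    span_joint F hcomm hdiag (Module.finrank ℂ (Uj j)) (Uj j) le_rfl (hUinv j)
  have hEx : ∀ j, ∃ E : Finset (Fin n → ℂ),
      ↑E ⊆ JE j ∧ Uj j ≤ Submodule.span ℂ (E : Set (Fin n → ℂ)) := by
    intro j
    obtain ⟨b, hbsub, hbspan, hbli⟩ := exists_linearIndependent ℂ (JE j)
    have hfin : b.Finite := hbli.setFinite
    refine ⟨hfin.toFinset, by simpa using hbsub, ?_⟩
    rw [Set.Finite.coe_toFinset, hbspan]
    exact hspan j
  choose E hEsub hEspan using hEx
  have hsingle : ∀ j, Pi.single j (1:ℂ) ∈ Uj j := by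
    intro j
    rw [hUmem]
    intro i hij
    exact Pi.single_eq_of_ne (fun h => hij (by rw [h]; exact hrefl j)) 1
  have hall : ∀ T : Finset (Fin n),
      T.card ≤ Module.finrank ℂ
        (Submodule.span ℂ (↑(T.biUnion E) : Set (Fin n → ℂ))) := by
    intro T
    have hle : Submodule.span ℂ ((fun j => Pi.single j (1:ℂ)) '' ↑T)
        ≤ Submodule.span ℂ (↑(T.biUnion E) : Set (Fin n → ℂ)) := by
      rw [Submodule.span_le]
      rintro z ⟨j, hjT, rfl⟩
      have h1 : Pi.single j (1:ℂ) ∈ Submodule.span ℂ (↑(E j) : Set (Fin n → ℂ)) :=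
        hEspan j (hsingle j)
      refine Submodule.span_le.mpr ?_ h1
      intro z hz
      refine Submodule.subset_span ?_
      rw [Finset.mem_coe, Finset.mem_biUnion]
      exact ⟨j, hjT, hz⟩
    have hli : LinearIndependent ℂ
        (fun j : {x // x ∈ T} => (Pi.single (j : Fin n) (1:ℂ) : Fin n → ℂ)) := by
      have h0 := (Pi.basisFun ℂ (Fin n)).linearIndependent
      have h2 := h0.comp (fun j : {x // x ∈ T} => (j : Fin n)) Subtype.val_injective
      have heq : (⇑(Pi.basisFun ℂ (Fin n)) ∘ fun j : {x // x ∈ T} => (j : Fin n))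
          = fun j : {x // x ∈ T} => (Pi.single (j : Fin n) (1:ℂ) : Fin n → ℂ) := by
        funext j
        simp [Pi.basisFun_apply]
      rwa [heq] at h2
    have hc := linearIndependent_iff_card_eq_finrank_span.mp hli
    rw [Fintype.card_coe] at hc
    have hrange : (Set.range fun j : {x // x ∈ T} => (Pi.single (j : Fin n) (1:ℂ) : Fin n → ℂ))
        = (fun j => Pi.single j (1:ℂ)) '' ↑T := by
      ext z
      constructor
      · rintro ⟨⟨j, hj⟩, rfl⟩; exact ⟨j, hj, rfl⟩
      · rintro ⟨j, hj, rfl⟩; exact ⟨⟨j, hj⟩, rfl⟩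
    rw [hrange] at hc
    rw [hc]
    exact Submodule.finrank_mono hle
  obtain ⟨v, hvE, hvli⟩ := rado E hall
  have hvJE : ∀ j, v j ∈ JE j := fun j => hEsub j (hvE j)
  set S : Matrix (Fin n) (Fin n) ℂ := Matrix.of (fun i j => v j i) with hS
  have hSA : S ∈ A := by
    rw [hA]
    intro i j hij
    exact ((hvJE j).1 : ∀ i, ¬ ρ i j → v j i = 0) i hij
  have hcard : Fintype.card (Fin n) = Module.finrank ℂ (Fin n → ℂ) := by
    simp [Module.finrank_pi]
  set b := basisOfLinearIndependentOfCardEqFinrank hvli hcard with hb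
  have hSunit : IsUnit S := by
    have h1 : S = (Pi.basisFun ℂ (Fin n)).toMatrix ⇑b := by
      ext i j
      rw [Basis.toMatrix_apply, Pi.basisFun_repr, hb,
        coe_basisOfLinearIndependentOfCardEqFinrank]
      rfl
    rw [h1]
    have := Basis.invertibleToMatrix (Pi.basisFun ℂ (Fin n)) b
    exact isUnit_of_invertible _
  refine ⟨S, hSA, hSunit, ?_⟩
  intro X hX
  choose μ hμ using fun j => (hvJE j).2 X hX
  have hXS : X * S = S * Matrix.diagonal μ := by
    ext i j
    rw [Matrix.mul_apply, Matrix.mul_diagonal]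
    have h := congrFun (hμ j) i
    rw [show (X *ᵥ v j) i = ∑ k, X i k * v j k by
      simp [Matrix.mulVec, dotProduct]] at h
    simp only [Pi.smul_apply, smul_eq_mul] at h
    show (∑ k, X i k * v j k) = v j i * μ j
    rw [h]
    ring
  have hdet : IsUnit S.det := (Matrix.isUnit_iff_isUnit_det S).mp hSunit
  have hfin : S⁻¹ * X * S = Matrix.diagonal μ := by
    rw [Matrix.mul_assoc, hXS, ← Matrix.mul_assoc, Matrix.nonsing_inv_mul S hdet,
      Matrix.one_mul]
  rw [hfin]
  exact Matrix.isDiag_diagonal μ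
end

section
/- Let A_ρ ⊆ M_n be a structural matrix algebra. Then the closure of ℛ (in the norm topology of M_n) equals the set { a b* : a, b ∈ ℂⁿ such that there exists k ∈ {1,…,n} with a e_k* ∈ A_ρ and e_k b* ∈ A_ρ }, and this set is contained in A_ρ. (Here b* denotes the conjugate transpose of the column vector b, so a b* is the rank ≤ 1 matrix with entries a_i·conj(b_j), and e_k is the k-th standard basis vector.) -/
open Matrix

lemma auxRankLeOne {n : ℕ} (u v : Fin n → ℂ) :
    (Matrix.of fun i j => u i * v j : Matrix (Fin n) (Fin n) ℂ).rank ≤ 1 := by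
  have h : (Matrix.of fun i j => u i * v j : Matrix (Fin n) (Fin n) ℂ)
      = (Matrix.replicateCol (Fin 1) u) * (Matrix.replicateRow (Fin 1) v) := by
    ext i j; simp [Matrix.mul_apply]
  rw [h]
  exact le_trans (Matrix.rank_mul_le_left _ _)
    (le_trans (Matrix.rank_le_card_width _) (by simp))

lemma auxRankZero {n : ℕ} (X : Matrix (Fin n) (Fin n) ℂ) (h : X.rank = 0) : X = 0 := by
  have h1 : LinearMap.range X.mulVecLin = ⊥ := Submodule.finrank_eq_zero.mp h
  have h2 : X.mulVecLin = 0 := LinearMap.range_eq_bot.mp h1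
  ext i j
  have h3 : X.mulVecLin (Pi.single j 1) = 0 := by rw [h2]; rfl
  have h4 := congrFun h3 i
  simpa [Matrix.mulVecLin_apply, Matrix.mulVec_single] using h4

lemma auxSq {n : ℕ} (u v : Fin n → ℂ) :
    (Matrix.of fun i j => u i * v j : Matrix (Fin n) (Fin n) ℂ) *
      (Matrix.of fun i j => u i * v j) =
    (∑ i, u i * v i) • (Matrix.of fun i j => u i * v j) := by
  ext i j
  simp only [Matrix.mul_apply, Matrix.of_apply, Matrix.smul_apply, smul_eq_mul,
    Finset.sum_mul, Finset.mul_sum]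
  exact Finset.sum_congr rfl fun b _ => by ring

lemma auxPow {n : ℕ} (u v : Fin n → ℂ) (N : ℕ) :
    (Matrix.of fun i j => u i * v j : Matrix (Fin n) (Fin n) ℂ) ^ (N + 1) =
    (∑ i, u i * v i) ^ N • (Matrix.of fun i j => u i * v j) := by
  induction N with
  | zero => simp
  | succ N ih =>
    rw [pow_succ, ih, smul_mul_assoc, auxSq, smul_smul, pow_succ]

lemma auxTrace {n : ℕ} (u v : Fin n → ℂ) :
    (Matrix.of fun i j => u i * v j : Matrix (Fin n) (Fin n) ℂ).trace = ∑ i, u i * v i := by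
  simp [Matrix.trace, Matrix.diag]

lemma auxNotNil {n : ℕ} (u v : Fin n → ℂ) (k : Fin n)
    (hc : (∑ i, u i * v i) ≠ 0) :
    ¬ IsNilpotent (Matrix.of fun i j => u i * v j : Matrix (Fin n) (Fin n) ℂ) := by
  rintro ⟨N, hN⟩
  have hX : (Matrix.of fun i j => u i * v j : Matrix (Fin n) (Fin n) ℂ) ≠ 0 := by
    intro h0
    apply hc
    rw [← auxTrace u v, h0, Matrix.trace_zero]
  cases N with
  | zero =>
    have h1 : (1 : Matrix (Fin n) (Fin n) ℂ) k k = 0 := by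
      rw [← pow_zero (Matrix.of fun i j => u i * v j : Matrix (Fin n) (Fin n) ℂ), hN]; rfl
    simp at h1
  | succ N =>
    rw [auxPow] at hN
    rcases smul_eq_zero.mp hN with h1 | h1
    · exact pow_ne_zero _ hc h1
    · exact hX h1

lemma auxMinor {n : ℕ} (X : Matrix (Fin n) (Fin n) ℂ) (h : X.rank ≤ 1)
    (i i' j j' : Fin n) : X i j * X i' j' = X i j' * X i' j := by
  by_contra hne
  have hdet : (!![X i j, X i j'; X i' j, X i' j'] : Matrix (Fin 2) (Fin 2) ℂ).det ≠ 0 := by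
    rw [Matrix.det_fin_two_of]
    intro h0
    exact hne (by linear_combination h0)
  have hrB : (!![X i j, X i j'; X i' j, X i' j'] : Matrix (Fin 2) (Fin 2) ℂ).rank = 2 := by
    rw [Matrix.rank_of_isUnit _ ((Matrix.isUnit_iff_isUnit_det _).mpr (isUnit_iff_ne_zero.mpr hdet))]
    simp
  have key : ∀ r c, ((Matrix.of fun r c => if c = ![i, i'] r then (1:ℂ) else 0 : Matrix (Fin 2) (Fin n) ℂ) *
      (X * (Matrix.of fun r c => if r = ![j, j'] c then (1:ℂ) else 0 : Matrix (Fin n) (Fin 2) ℂ))) r c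
      = X (![i,i'] r) (![j,j'] c) := by
    intro r c
    simp [Matrix.mul_apply, mul_ite, ite_mul, Finset.sum_ite_eq, Finset.sum_ite_eq']
  have hfac : (!![X i j, X i j'; X i' j, X i' j'] : Matrix (Fin 2) (Fin 2) ℂ)
      = (Matrix.of fun r c => if c = ![i, i'] r then (1:ℂ) else 0 : Matrix (Fin 2) (Fin n) ℂ) *
      (X * (Matrix.of fun r c => if r = ![j, j'] c then (1:ℂ) else 0 : Matrix (Fin n) (Fin 2) ℂ)) := by
    ext r c
    rw [key]
    fin_cases r <;> fin_cases c <;> simp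
  have hle : (!![X i j, X i j'; X i' j, X i' j'] : Matrix (Fin 2) (Fin 2) ℂ).rank ≤ X.rank := by
    rw [hfac]
    exact le_trans (Matrix.rank_mul_le_right _ _) (Matrix.rank_mul_le_left _ _)
  omega

theorem stmt_7 (n : ℕ) (ρ : Fin n → Fin n → Prop)
    (hrefl : ∀ i, ρ i i) (htrans : ∀ i j k, ρ i j → ρ j k → ρ i k)
    (A : Set (Matrix (Fin n) (Fin n) ℂ))
    (hA : A = {X : Matrix (Fin n) (Fin n) ℂ | ∀ i j, ¬ ρ i j → X i j = 0})
    (R : Set (Matrix (Fin n) (Fin n) ℂ))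
    (hR : R = {X : Matrix (Fin n) (Fin n) ℂ | X ∈ A ∧ X.rank = 1 ∧ ¬ IsNilpotent X}) :
    closure R =
      {M : Matrix (Fin n) (Fin n) ℂ | ∃ (a b : Fin n → ℂ) (k : Fin n),
        (Matrix.of fun i j => if j = k then a i else 0) ∈ A ∧
        (Matrix.of fun i j => if i = k then star (b j) else 0) ∈ A ∧
        M = Matrix.of fun i j => a i * star (b j)} ∧
    closure R ⊆ A := by
  classical
  haveI : FrechetUrysohnSpace (Matrix (Fin n) (Fin n) ℂ) :=
    inferInstanceAs (FrechetUrysohnSpace (Fin n → Fin n → ℂ))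
  subst hA hR
  set S : Set (Matrix (Fin n) (Fin n) ℂ) :=
    {M : Matrix (Fin n) (Fin n) ℂ | ∃ (a b : Fin n → ℂ) (k : Fin n),
        (Matrix.of fun i j => if j = k then a i else 0) ∈
          {X : Matrix (Fin n) (Fin n) ℂ | ∀ i j, ¬ ρ i j → X i j = 0} ∧
        (Matrix.of fun i j => if i = k then star (b j) else 0) ∈
          {X : Matrix (Fin n) (Fin n) ℂ | ∀ i j, ¬ ρ i j → X i j = 0} ∧
        M = Matrix.of fun i j => a i * star (b j)} with hS
  set T : Set (Matrix (Fin n) (Fin n) ℂ) :=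
    ⋃ k : Fin n, {M : Matrix (Fin n) (Fin n) ℂ |
      (∀ i i' j j', M i j * M i' j' = M i j' * M i' j) ∧
      (∀ i j, ¬ (ρ i k ∧ ρ k j) → M i j = 0)} with hT
  -- S ⊆ A
  have hSA : S ⊆ {X : Matrix (Fin n) (Fin n) ℂ | ∀ i j, ¬ ρ i j → X i j = 0} := by
    rintro M ⟨a, b, k, hcol, hrow, rfl⟩ i j hij
    have ha' : ∀ i, ¬ ρ i k → a i = 0 := fun i h => by simpa using hcol i k h
    have hb' : ∀ j, ¬ ρ k j → b j = 0 := fun j h => by simpa using hrow k j h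
    show a i * star (b j) = 0
    by_cases h1 : ρ i k
    · by_cases h2 : ρ k j
      · exact absurd (htrans i k j h1 h2) hij
      · simp [hb' j h2]
    · simp [ha' i h1]
  -- S = T
  have hST : S = T := by
    apply Set.Subset.antisymm
    · rintro M ⟨a, b, k, hcol, hrow, rfl⟩
      have ha' : ∀ i, ¬ ρ i k → a i = 0 := fun i h => by simpa using hcol i k h
      have hb' : ∀ j, ¬ ρ k j → b j = 0 := fun j h => by simpa using hrow k j h
      refine Set.mem_iUnion.mpr ⟨k, ?_, ?_⟩
      · intro i i' j j'; simp only [Matrix.of_apply]; ring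
      · intro i j h
        show a i * star (b j) = 0
        rcases not_and_or.mp h with h1 | h2
        · simp [ha' i h1]
        · simp [hb' j h2]
    · intro M hM
      obtain ⟨k, hmin, hsupp⟩ := Set.mem_iUnion.mp hM
      by_cases hM0 : M = 0
      · refine ⟨0, 0, k, ?_, ?_, ?_⟩
        · intro i j _; simp
        · intro i j _; simp
        · ext i j; simp [hM0]
      · have : ∃ i0 j0, M i0 j0 ≠ 0 := by
          by_contra hc
          push_neg at hc
          exact hM0 (by ext i j; simpa using hc i j)
        obtain ⟨i0, j0, h0⟩ := this
        refine ⟨fun i => M i j0, fun j => star (M i0 j / M i0 j0), k, ?_, ?_, ?_⟩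
        · intro i j hij
          show (if j = k then M i j0 else 0) = 0
          by_cases hjk : j = k
          · rw [if_pos hjk]
            subst hjk
            exact hsupp i j0 (fun hand => hij hand.1)
          · rw [if_neg hjk]
        · intro i j hij
          show (if i = k then star (star (M i0 j / M i0 j0)) else 0) = 0
          by_cases hik : i = k
          · rw [if_pos hik, star_star]
            subst hik
            rw [hsupp i0 j (fun hand => hij hand.2), zero_div]
          · rw [if_neg hik]
        · ext i j
          show M i j = M i j0 * star (star (M i0 j / M i0 j0))
          rw [star_star]
          field_simp
          linear_combination hmin i i0 j j0
  -- T is closed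
  have hTclosed : IsClosed T := by
    rw [hT]
    apply isClosed_iUnion_of_finite
    intro k
    apply IsClosed.inter
    · have he : {M : Matrix (Fin n) (Fin n) ℂ | ∀ i i' j j', M i j * M i' j' = M i j' * M i' j}
          = ⋂ i, ⋂ i', ⋂ j, ⋂ j', {M : Matrix (Fin n) (Fin n) ℂ |
            M i j * M i' j' = M i j' * M i' j} := by
        ext M; simp [Set.mem_iInter]
      show IsClosed {M : Matrix (Fin n) (Fin n) ℂ | ∀ i i' j j',
        M i j * M i' j' = M i j' * M i' j}
      rw [he]
      refine isClosed_iInter fun i => isClosed_iInter fun i' =>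
        isClosed_iInter fun j => isClosed_iInter fun j' => isClosed_eq ?_ ?_
      · exact ((continuous_id.matrix_elem i j).mul (continuous_id.matrix_elem i' j'))
      · exact ((continuous_id.matrix_elem i j').mul (continuous_id.matrix_elem i' j))
    · have he : {M : Matrix (Fin n) (Fin n) ℂ | ∀ i j, ¬ (ρ i k ∧ ρ k j) → M i j = 0}
          = ⋂ i, ⋂ j, {M : Matrix (Fin n) (Fin n) ℂ | ¬ (ρ i k ∧ ρ k j) → M i j = 0} := by
        ext M; simp [Set.mem_iInter]
      show IsClosed {M : Matrix (Fin n) (Fin n) ℂ | ∀ i j, ¬ (ρ i k ∧ ρ k j) → M i j = 0}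
      rw [he]
      refine isClosed_iInter fun i => isClosed_iInter fun j => ?_
      rcases Classical.em (ρ i k ∧ ρ k j) with h | h
      · have : {M : Matrix (Fin n) (Fin n) ℂ | ¬ (ρ i k ∧ ρ k j) → M i j = 0} = Set.univ := by
          ext M; simp [h]
        rw [this]; exact isClosed_univ
      · have : {M : Matrix (Fin n) (Fin n) ℂ | ¬ (ρ i k ∧ ρ k j) → M i j = 0}
            = {M : Matrix (Fin n) (Fin n) ℂ | M i j = 0} := by
          ext M; simp [h]
        rw [this]; exact isClosed_eq (continuous_id.matrix_elem i j) continuous_const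
  -- R ⊆ S
  have hRS : {X : Matrix (Fin n) (Fin n) ℂ |
      (X ∈ {X : Matrix (Fin n) (Fin n) ℂ | ∀ i j, ¬ ρ i j → X i j = 0}) ∧
      X.rank = 1 ∧ ¬ IsNilpotent X} ⊆ S := by
    rintro X ⟨hXA, hrk, hnil⟩
    have hX0 : X ≠ 0 := by
      intro h; rw [h, Matrix.rank_zero] at hrk; exact one_ne_zero hrk.symm
    have : ∃ i0 j0, X i0 j0 ≠ 0 := by
      by_contra hc
      push_neg at hc
      exact hX0 (by ext i j; simpa using hc i j)
    obtain ⟨i0, j0, h0⟩ := this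
    set u : Fin n → ℂ := fun i => X i j0 with hu
    set v : Fin n → ℂ := fun j => X i0 j / X i0 j0 with hv
    have hXuv : X = Matrix.of fun i j => u i * v j := by
      ext i j
      show X i j = X i j0 * (X i0 j / X i0 j0)
      field_simp
      linear_combination auxMinor X hrk.le i i0 j j0
    have hc : (∑ i, u i * v i) ≠ 0 := by
      intro hc0
      apply hnil
      refine ⟨2, ?_⟩
      rw [pow_two]
      nth_rewrite 1 [hXuv]
      nth_rewrite 1 [hXuv]
      rw [auxSq, hc0, zero_smul]
    obtain ⟨k, -, hk⟩ := Finset.exists_ne_zero_of_sum_ne_zero hc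
    have huk : u k ≠ 0 := fun h => hk (by rw [h, zero_mul])
    have hvk : v k ≠ 0 := fun h => hk (by rw [h, mul_zero])
    refine ⟨u, fun j => star (v j), k, ?_, ?_, ?_⟩
    · intro i j hij
      show (if j = k then u i else 0) = 0
      by_cases hjk : j = k
      · rw [if_pos hjk]
        subst hjk
        have hik : X i j = 0 := hXA i j hij
        rw [hXuv] at hik
        exact (mul_eq_zero.mp hik).resolve_right hvk
      · rw [if_neg hjk]
    · intro i j hij
      show (if i = k then star (star (v j)) else 0) = 0
      by_cases hik : i = k
      · rw [if_pos hik, star_star]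
        subst hik
        have hkj : X i j = 0 := hXA i j hij
        rw [hXuv] at hkj
        exact (mul_eq_zero.mp hkj).resolve_left huk
      · rw [if_neg hik]
    · rw [hXuv]
      ext i j
      simp
  -- S ⊆ closure R
  have hSclos : S ⊆ closure {X : Matrix (Fin n) (Fin n) ℂ |
      (X ∈ {X : Matrix (Fin n) (Fin n) ℂ | ∀ i j, ¬ ρ i j → X i j = 0}) ∧
      X.rank = 1 ∧ ¬ IsNilpotent X} := by
    rintro M ⟨a, b, k, hcol, hrow, rfl⟩
    have ha : ∀ i, ¬ ρ i k → a i = 0 := fun i h => by simpa using hcol i k h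
    have hb : ∀ j, ¬ ρ k j → b j = 0 := fun j h => by simpa using hrow k j h
    set u : ℝ → Fin n → ℂ := fun t i => a i + (t : ℂ) * (if i = k then 1 else 0) with hudef
    set v : ℝ → Fin n → ℂ := fun t j => star (b j) + (t : ℂ) * (if j = k then 1 else 0) with hvdef
    set F : ℝ → Matrix (Fin n) (Fin n) ℂ := fun t => Matrix.of fun i j => u t i * v t j with hFdef
    set ψ : ℝ → ℂ := fun t => ∑ i, u t i * v t i with hpsidef
    set C : ℂ := ∑ i, a i * star (b i) with hC
    set D : ℂ := a k + star (b k) with hD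
    have hψeq : ∀ t : ℝ, ψ t = C + D * (t : ℂ) + (t : ℂ) * (t : ℂ) := by
      intro t
      have h1 : ∀ i, u t i * v t i
          = a i * star (b i) + (if i = k then D * (t:ℂ) + (t:ℂ) * (t:ℂ) else 0) := by
        intro i
        by_cases h : i = k
        · subst h
          simp only [hudef, hvdef, hD, eq_self_iff_true, if_true, ite_true]
          try ring
        · simp [hudef, hvdef, h]
      rw [hpsidef]
      simp only [h1]
      rw [Finset.sum_add_distrib, Finset.sum_ite_eq' Finset.univ k
        (fun _ => D * (t:ℂ) + (t:ℂ) * (t:ℂ))]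
      simp only [Finset.mem_univ, if_pos, hC]
      ring
    -- choose good perturbations
    have hgood : ∀ m : ℕ, ∃ s : ℝ, 0 < s ∧ s ≤ 1 / (m + 1) ∧ ψ s ≠ 0 := by
      intro m
      set c1 : ℝ := 1 / (m + 1) with hc1
      set c2 : ℝ := 1 / (m + 2) with hc2
      set c3 : ℝ := 1 / (m + 3) with hc3
      have hm1 : (0:ℝ) < (m:ℝ) + 1 := by positivity
      have hm2 : (0:ℝ) < (m:ℝ) + 2 := by positivity
      have hm3 : (0:ℝ) < (m:ℝ) + 3 := by positivity
      have hp1 : 0 < c1 := by rw [hc1]; positivity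
      have hp2 : 0 < c2 := by rw [hc2]; positivity
      have hp3 : 0 < c3 := by rw [hc3]; positivity
      have hle2 : c2 ≤ c1 := by
        rw [hc1, hc2]
        apply one_div_le_one_div_of_le hm1
        linarith
      have hle3 : c3 ≤ c1 := by
        rw [hc1, hc3]
        apply one_div_le_one_div_of_le hm1
        linarith
      have hne23 : c2 ≠ c3 := by
        rw [hc2, hc3]
        intro h
        rw [div_eq_div_iff hm2.ne' hm3.ne'] at h
        linarith
      have hne12 : c1 ≠ c2 := by
        rw [hc1, hc2]
        intro h
        rw [div_eq_div_iff hm1.ne' hm2.ne'] at h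
        linarith
      have hne13 : c1 ≠ c3 := by
        rw [hc1, hc3]
        intro h
        rw [div_eq_div_iff hm1.ne' hm3.ne'] at h
        linarith
      by_cases h1 : ψ c1 ≠ 0
      · exact ⟨c1, hp1, le_refl _, h1⟩
      by_cases h2 : ψ c2 ≠ 0
      · exact ⟨c2, hp2, hle2, h2⟩
      by_cases h3 : ψ c3 ≠ 0
      · exact ⟨c3, hp3, hle3, h3⟩
      exfalso
      rw [not_not] at h1 h2 h3
      rw [hψeq] at h1 h2 h3
      have e12 : D + (c1 : ℂ) + (c2 : ℂ) = 0 := by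
        have hcc : (c1 : ℂ) - (c2 : ℂ) ≠ 0 := by
          rw [sub_ne_zero]
          exact fun h => hne12 (by exact_mod_cast h)
        apply mul_left_cancel₀ hcc
        rw [mul_zero]
        linear_combination h1 - h2
      have e13 : D + (c1 : ℂ) + (c3 : ℂ) = 0 := by
        have hcc : (c1 : ℂ) - (c3 : ℂ) ≠ 0 := by
          rw [sub_ne_zero]
          exact fun h => hne13 (by exact_mod_cast h)
        apply mul_left_cancel₀ hcc
        rw [mul_zero]
        linear_combination h1 - h3
      have : (c2 : ℂ) = (c3 : ℂ) := by linear_combination e12 - e13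
      exact hne23 (by exact_mod_cast this)
    choose t ht0 htle htne using hgood
    apply mem_closure_iff_seq_limit.mpr
    refine ⟨fun m => F (t m), ?_, ?_⟩
    · intro m
      refine ⟨?_, ?_, ?_⟩
      · -- F (t m) ∈ A
        intro i j hij
        show u (t m) i * v (t m) j = 0
        by_cases h1 : ρ i k
        · by_cases h2 : ρ k j
          · exact absurd (htrans i k j h1 h2) hij
          · have hjk : j ≠ k := fun h => h2 (h ▸ hrefl k)
            have hv0 : v (t m) j = 0 := by simp [hvdef, hjk, hb j h2]
            rw [hv0, mul_zero]
        · have hik : i ≠ k := fun h => h1 (h ▸ hrefl k)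
          have hu0 : u (t m) i = 0 := by simp [hudef, hik, ha i h1]
          rw [hu0, zero_mul]
      · -- rank = 1
        show (F (t m)).rank = 1
        have htr : (F (t m)).trace = ψ (t m) := auxTrace _ _
        have hne : F (t m) ≠ 0 := by
          intro h
          apply htne m
          rw [← htr, h, Matrix.trace_zero]
        have h1 : (F (t m)).rank ≤ 1 := auxRankLeOne _ _
        have h2 : (F (t m)).rank ≠ 0 := fun h => hne (auxRankZero _ h)
        omega
      · show ¬ IsNilpotent (F (t m))
        exact auxNotNil _ _ k (htne m)
    · -- tendsto
      have hFcont : Continuous F := by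
        apply continuous_matrix
        intro i j
        simp only [hFdef, hudef, hvdef, Matrix.of_apply]
        fun_prop
      have ht_tendsto : Filter.Tendsto t Filter.atTop (nhds 0) := by
        apply squeeze_zero (fun m => (ht0 m).le) htle
        exact tendsto_one_div_add_atTop_nhds_zero_nat
      have hF0 : F 0 = Matrix.of fun i j => a i * star (b j) := by
        ext i j
        simp [hFdef, hudef, hvdef]
      rw [← hF0]
      exact (hFcont.tendsto 0).comp ht_tendsto
  -- assemble
  have hmain : closure {X : Matrix (Fin n) (Fin n) ℂ |
      (X ∈ {X : Matrix (Fin n) (Fin n) ℂ | ∀ i j, ¬ ρ i j → X i j = 0}) ∧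
      X.rank = 1 ∧ ¬ IsNilpotent X} = S := by
    apply Set.Subset.antisymm
    · apply closure_minimal hRS
      rw [hST]; exact hTclosed
    · exact hSclos
  exact ⟨hmain, hmain ▸ hSA⟩
end

section
/- Let A_ρ ⊆ M_n be a structural matrix algebra. Every matrix A ∈ A_ρ whose support is contained in a single row (i.e., there is j such that A_{ik} = 0 whenever i ≠ j) or in a single column belongs to the closure of ℛ in M_n. -/
/-!
A matrix supported in row or column `j` has rank at most one, and so does `X + t • E_jj`
for every scalar `t`. Its trace is `tr X + t`, which is nonzero for all `t ≠ -tr X`; a matrix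
of rank at most one with nonzero trace has rank exactly one and is not nilpotent (nilpotent
matrices have nilpotent, hence zero, trace). Since `E_jj` lies in `A_ρ` by reflexivity,
letting `t → 0` through `t ≠ -tr X` exhibits `X` as a limit of points of `ℛ`.
-/

open Matrix

namespace Matrix

variable {m n K : Type*} [Fintype n] [Field K]

theorem eq_zero_of_rank_eq_zero [Fintype m] {M : Matrix m n K} (h : M.rank = 0) : M = 0 := by
  classical
  rw [rank, Submodule.finrank_eq_zero, LinearMap.range_eq_bot] at h
  ext i k
  simpa using congrFun (LinearMap.congr_fun h (Pi.single k 1)) i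

theorem rank_eq_one_of_rank_le_one_of_trace_ne_zero {M : Matrix n n K} (h : M.rank ≤ 1)
    (ht : M.trace ≠ 0) : M.rank = 1 := by
  refine le_antisymm h (Nat.one_le_iff_ne_zero.mpr fun h0 => ht ?_)
  rw [eq_zero_of_rank_eq_zero h0, trace_zero]

theorem not_isNilpotent_of_trace_ne_zero [DecidableEq n] {M : Matrix n n K} (ht : M.trace ≠ 0) :
    ¬IsNilpotent M :=
  fun h => ht (isNilpotent_trace_of_isNilpotent h).eq_zero

variable [DecidableEq m]

theorem rank_le_one_of_forall_row_ne_eq_zero {M : Matrix m n K} {j : m}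
    (h : ∀ i k, i ≠ j → M i k = 0) : M.rank ≤ 1 := by
  have : M = vecMulVec (Pi.single j 1) (M j) := by
    ext i k
    rcases eq_or_ne i j with rfl | hi
    · simp [vecMulVec_apply]
    · simp [vecMulVec_apply, hi, h i k hi]
  rw [this]
  exact rank_vecMulVec_le _ _

theorem rank_le_one_of_forall_col_ne_eq_zero [Fintype m] {M : Matrix n m K} {j : m}
    (h : ∀ i k, k ≠ j → M i k = 0) : M.rank ≤ 1 := by
  rw [← rank_transpose]
  exact rank_le_one_of_forall_row_ne_eq_zero fun k i hk => h i k hk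

end Matrix

theorem mem_closure_of_rank_add_single_le_one {ι 𝕜 : Type*} [Fintype ι] [DecidableEq ι]
    [NontriviallyNormedField 𝕜] {ρ : ι → ι → Prop} {X : Matrix ι ι 𝕜} {j : ι} (hj : ρ j j)
    (hX : ∀ i k, ¬ρ i k → X i k = 0) (hrank : ∀ t : 𝕜, (X + t • single j j 1).rank ≤ 1) :
    X ∈ closure {Y : Matrix ι ι 𝕜 |
      (∀ i k, ¬ρ i k → Y i k = 0) ∧ Y.rank = 1 ∧ ¬IsNilpotent Y} := by
  set f : 𝕜 → Matrix ι ι 𝕜 := fun t => X + t • single j j 1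
  have hf : Continuous f := continuous_const.add (continuous_id.smul continuous_const)
  have h0 : (0 : 𝕜) ∈ closure {-X.trace}ᶜ := by simp
  have hmem := mem_closure_image hf.continuousAt h0
  rw [show f 0 = X by simp [f]] at hmem
  refine closure_mono ?_ hmem
  rintro _ ⟨t, ht, rfl⟩
  have htrace : (f t).trace ≠ 0 := by
    simpa [f, add_eq_zero_iff_neg_eq, eq_comm] using ht
  refine ⟨fun i k hik => ?_, rank_eq_one_of_rank_le_one_of_trace_ne_zero (hrank t) htrace,
    not_isNilpotent_of_trace_ne_zero htrace⟩
  have : ¬(j = i ∧ j = k) := by rintro ⟨rfl, rfl⟩; exact hik hj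
  simp [f, hX i k hik, single_apply_of_ne _ _ _ _ _ this]

theorem stmt_8_general (n : ℕ) (ρ : Fin n → Fin n → Prop)
    (hrefl : ∀ i, ρ i i)
    (A : Set (Matrix (Fin n) (Fin n) ℂ))
    (hA : A = {X : Matrix (Fin n) (Fin n) ℂ | ∀ i j, ¬ ρ i j → X i j = 0})
    (R : Set (Matrix (Fin n) (Fin n) ℂ))
    (hR : R = {X : Matrix (Fin n) (Fin n) ℂ | X ∈ A ∧ X.rank = 1 ∧ ¬ IsNilpotent X})
    (X : Matrix (Fin n) (Fin n) ℂ) (hX : X ∈ A)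
    (hrow : (∃ j : Fin n, ∀ i k, i ≠ j → X i k = 0) ∨
            (∃ j : Fin n, ∀ i k, k ≠ j → X i k = 0)) :
    X ∈ closure R := by
  subst hR hA
  rcases hrow with ⟨j, hj⟩ | ⟨j, hj⟩
  · refine mem_closure_of_rank_add_single_le_one (hrefl j) hX fun t =>
      rank_le_one_of_forall_row_ne_eq_zero (j := j) fun i k hi => ?_
    simp [hj i k hi, single_apply_of_row_ne hi.symm]
  · refine mem_closure_of_rank_add_single_le_one (hrefl j) hX fun t =>
      rank_le_one_of_forall_col_ne_eq_zero (j := j) fun i k hk => ?_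
    simp [hj i k hk, single_apply_of_col_ne _ _ hk.symm]

theorem stmt_8 (n : ℕ) (ρ : Fin n → Fin n → Prop)
    (hrefl : ∀ i, ρ i i) (htrans : ∀ i j k, ρ i j → ρ j k → ρ i k)
    (A : Set (Matrix (Fin n) (Fin n) ℂ))
    (hA : A = {X : Matrix (Fin n) (Fin n) ℂ | ∀ i j, ¬ ρ i j → X i j = 0})
    (R : Set (Matrix (Fin n) (Fin n) ℂ))
    (hR : R = {X : Matrix (Fin n) (Fin n) ℂ | X ∈ A ∧ X.rank = 1 ∧ ¬ IsNilpotent X})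
    (X : Matrix (Fin n) (Fin n) ℂ) (hX : X ∈ A)
    (hrow : (∃ j : Fin n, ∀ i k, i ≠ j → X i k = 0) ∨
            (∃ j : Fin n, ∀ i k, k ≠ j → X i k = 0)) :
    X ∈ closure R :=
  stmt_8_general n ρ hrefl A hA R hR X hX hrow
end

section
/- Let A_ρ ⊆ M_3 be a structural matrix algebra distinct from the algebra D_3 of 3×3 diagonal matrices. The following statements are equivalent: (a) for each (i,j) ∈ ρ with i ≠ j, the set (ρ(i) ∪ ρ⁻¹(i)) ∩ (ρ(j) ∪ ρ⁻¹(j)) has at least 3 elements; (b) there exist distinct i, j ∈ {1,2,3} such that ρ(i) = ρ⁻¹(j) = {1,2,3}; (c) there exists a permutation π of {1,2,3} such that R_π A_ρ R_π⁻¹ is a block upper-triangular subalgebra of M_3, where R_π = Σ_k E_{k,π(k)} is the permutation matrix associated to π. -/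
/-! Everything reduces to statements about the relation `ρ`. Testing against matrix units shows
that `A_ρ` determines `ρ`; conjugation by `R_π` turns `A_ρ` into `A_σ` with
`σ i j ↔ ρ (π i) (π j)`; and the block upper-triangular algebras are the `A_σ` with
`σ i j ↔ c i ≤ c j` for a monotone `c`. For (c) ⇒ (b), `π 0` and `π 2` are then a least and a
greatest element of `ρ`. The other implications are statements about preorders on three points,
checked exhaustively over Boolean relations. -/

open Matrix

namespace Matrix

variable {m n R : Type*}

/-- The structural matrix set `A_ρ`. -/
def structuralSet [Zero R] (ρ : m → n → Prop) : Set (Matrix m n R) :=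
  {X | ∀ i j, ¬ ρ i j → X i j = 0}

theorem structuralSet_subset_structuralSet_iff [Zero R] [Nontrivial R] {σ τ : m → n → Prop} :
    structuralSet (R := R) σ ⊆ structuralSet τ ↔ ∀ i j, σ i j → τ i j := by
  classical
  refine ⟨fun h i j hσ => ?_, fun h X hX i j hτ => hX i j (mt (h i j) hτ)⟩
  obtain ⟨a, ha⟩ := exists_ne (0 : R)
  by_contra hτ
  have hsingle : single i j a ∈ structuralSet σ := by
    intro k l hkl
    rw [single_apply_of_ne]
    rintro ⟨rfl, rfl⟩
    exact hkl hσ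
  exact ha (by simpa using h hsingle i j hτ)

theorem structuralSet_eq_structuralSet_iff [Zero R] [Nontrivial R] {σ τ : m → n → Prop} :
    structuralSet (R := R) σ = structuralSet τ ↔ ∀ i j, (σ i j ↔ τ i j) := by
  simp only [subset_antisymm_iff, structuralSet_subset_structuralSet_iff, iff_def, forall_and]

theorem setOf_isDiag_eq_structuralSet [Zero R] :
    {X : Matrix n n R | X.IsDiag} = structuralSet (· = ·) :=
  Set.ext fun _ => ⟨fun hX _ _ hij => hX hij, fun hX _ _ => hX _ _⟩

theorem setOf_blockTriangular_eq_structuralSet [Zero R] {α : Type*} [LinearOrder α] (c : m → α) :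
    {X : Matrix m m R | X.BlockTriangular c} = structuralSet (fun i j => c i ≤ c j) := by
  ext X
  simp [BlockTriangular, structuralSet]

theorem of_ite_apply_eq_permMatrix [DecidableEq n] [Zero R] [One R] (π : Equiv.Perm n) :
    (of fun k l => if π k = l then (1 : R) else 0) = π.permMatrix R := by
  ext k l
  simp [PEquiv.toMatrix_apply, eq_comm]

theorem inv_permMatrix [Fintype n] [DecidableEq n] [CommRing R] (π : Equiv.Perm n) :
    (π.permMatrix R)⁻¹ = π⁻¹.permMatrix R :=
  inv_eq_right_inv (by rw [← permMatrix_mul, inv_mul_cancel, permMatrix_one])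

theorem permMatrix_mul_mul_inv [Fintype n] [DecidableEq n] [CommRing R] (π : Equiv.Perm n)
    (X : Matrix n n R) : π.permMatrix R * X * (π.permMatrix R)⁻¹ = X.submatrix π π := by
  rw [inv_permMatrix, PEquiv.toMatrix_toPEquiv_mul, PEquiv.mul_toMatrix_toPEquiv,
    submatrix_submatrix]
  rfl

theorem setOf_permMatrix_conj_structuralSet [Fintype n] [DecidableEq n] [CommRing R]
    (π : Equiv.Perm n) (ρ : n → n → Prop) :
    {Y | ∃ X ∈ structuralSet ρ, Y = π.permMatrix R * X * (π.permMatrix R)⁻¹} =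
      structuralSet (fun i j => ρ (π i) (π j)) := by
  ext Y
  simp only [permMatrix_mul_mul_inv]
  constructor
  · rintro ⟨X, hX, rfl⟩ i j hij
    exact hX _ _ hij
  · intro hY
    refine ⟨Y.submatrix π.symm π.symm, fun i j hij => hY _ _ (by simpa using hij), ?_⟩
    ext i j
    simp

end Matrix

theorem Set.natCard_le_ncard_iff {α : Type*} [Finite α] {s : Set α} :
    Nat.card α ≤ s.ncard ↔ s = univ := by
  rw [eq_univ_iff_ncard]
  exact ⟨fun h => le_antisymm s.ncard_le_card h, fun h => h.ge⟩

theorem exists_least_ne_greatest_of_monotone_perm {n : ℕ} {α : Type*} [Preorder α]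
    {ρ : Fin (n + 2) → Fin (n + 2) → Prop} (π : Equiv.Perm (Fin (n + 2))) (c : Fin (n + 2) → α)
    (hc : Monotone c) (hρ : ∀ a b, ρ (π a) (π b) ↔ c a ≤ c b) :
    ∃ i j, i ≠ j ∧ (∀ k, ρ i k) ∧ ∀ k, ρ k j := by
  refine ⟨π 0, π (Fin.last _), π.injective.ne Fin.last_pos.ne, fun k => ?_, fun k => ?_⟩
  · simpa using hρ 0 (π.symm k) |>.2 (hc (Fin.zero_le _))
  · simpa using hρ (π.symm k) (Fin.last _) |>.2 (hc (Fin.le_last _))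

namespace Fin3

variable {ρ : Fin 3 → Fin 3 → Prop}

set_option maxRecDepth 10000 in
theorem forall_comparable_iff_exists_least_ne_greatest
    (hrefl : ∀ i, ρ i i) (htrans : ∀ i j k, ρ i j → ρ j k → ρ i k)
    (hne : ∃ i j, i ≠ j ∧ ρ i j) :
    (∀ i j, ρ i j → i ≠ j → ∀ k, (ρ i k ∨ ρ k i) ∧ (ρ j k ∨ ρ k j)) ↔
      ∃ i j, i ≠ j ∧ (∀ k, ρ i k) ∧ ∀ k, ρ k j := by
  classical
  have key : ∀ r : Fin 3 → Fin 3 → Bool,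
      (∀ i, r i i = true) → (∀ i j k, r i j = true → r j k = true → r i k = true) →
      (∃ i j, i ≠ j ∧ r i j = true) →
      ((∀ i j, r i j = true → i ≠ j →
          ∀ k, (r i k = true ∨ r k i = true) ∧ (r j k = true ∨ r k j = true)) ↔
        ∃ i j : Fin 3, i ≠ j ∧ (∀ k, r i k = true) ∧ ∀ k, r k j = true) := by
    decide
  simpa using key (fun i j => decide (ρ i j)) (by simpa using hrefl) (by simpa using htrans)
    (by simpa using hne)

set_option maxRecDepth 10000 in
theorem exists_monotone_perm_of_least_ne_greatest
    (hrefl : ∀ i, ρ i i) (htrans : ∀ i j k, ρ i j → ρ j k → ρ i k)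
    {i j : Fin 3} (hij : i ≠ j) (hi : ∀ k, ρ i k) (hj : ∀ k, ρ k j) :
    ∃ π : Equiv.Perm (Fin 3), ∃ c : Fin 3 → Fin 3, Monotone c ∧
      ∀ a b, (ρ (π a) (π b) ↔ c a ≤ c b) := by
  classical
  have key : ∀ r : Fin 3 → Fin 3 → Bool,
      (∀ i, r i i = true) → (∀ i j k, r i j = true → r j k = true → r i k = true) →
      ∀ i j, i ≠ j → (∀ k, r i k = true) → (∀ k, r k j = true) →
        ∃ π : Equiv.Perm (Fin 3), ∃ c : Fin 3 → Fin 3, Monotone c ∧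
          ∀ a b, (r (π a) (π b) = true ↔ c a ≤ c b) := by
    unfold Monotone
    decide
  simpa using key (fun i j => decide (ρ i j)) (by simpa using hrefl) (by simpa using htrans)
    i j hij (by simpa using hi) (by simpa using hj)

end Fin3

theorem stmt_12 (ρ : Fin 3 → Fin 3 → Prop)
    (hrefl : ∀ i, ρ i i) (htrans : ∀ i j k, ρ i j → ρ j k → ρ i k)
    (A : Set (Matrix (Fin 3) (Fin 3) ℂ))
    (hA : A = {X : Matrix (Fin 3) (Fin 3) ℂ | ∀ i j, ¬ ρ i j → X i j = 0})
    (hnotdiag : A ≠ {X : Matrix (Fin 3) (Fin 3) ℂ | X.IsDiag}) :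
    ((∀ i j, ρ i j → i ≠ j →
        3 ≤ (({k | ρ i k} ∪ {k | ρ k i}) ∩ ({k | ρ j k} ∪ {k | ρ k j})).ncard) ↔
      (∃ i j : Fin 3, i ≠ j ∧ (∀ k, ρ i k) ∧ (∀ k, ρ k j))) ∧
    ((∃ i j : Fin 3, i ≠ j ∧ (∀ k, ρ i k) ∧ (∀ k, ρ k j)) ↔
      (∃ π : Equiv.Perm (Fin 3), ∃ c : Fin 3 → ℕ, Monotone c ∧
        {Y : Matrix (Fin 3) (Fin 3) ℂ | ∃ X ∈ A,
            Y = (Matrix.of fun k l => if π k = l then (1 : ℂ) else 0) * X *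
              (Matrix.of fun k l => if π k = l then (1 : ℂ) else 0)⁻¹} =
          {X : Matrix (Fin 3) (Fin 3) ℂ | X.BlockTriangular c})) := by
  obtain rfl : A = structuralSet (R := ℂ) ρ := hA
  have hne : ∃ i j, i ≠ j ∧ ρ i j := by
    by_contra! hdiag
    refine hnotdiag ?_
    rw [setOf_isDiag_eq_structuralSet, structuralSet_eq_structuralSet_iff]
    exact fun i j => ⟨fun hij => by_contra (hdiag i j · hij), fun hij => hij ▸ hrefl i⟩
  have hncard : ∀ s : Set (Fin 3), 3 ≤ s.ncard ↔ s = Set.univ :=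
    fun s => by simpa using s.natCard_le_ncard_iff
  refine ⟨?_, ?_⟩
  · simp only [hncard, Set.eq_univ_iff_forall, Set.mem_inter_iff, Set.mem_union, Set.mem_ofPred]
    exact Fin3.forall_comparable_iff_exists_least_ne_greatest hrefl htrans hne
  · simp only [of_ite_apply_eq_permMatrix, setOf_permMatrix_conj_structuralSet,
      setOf_blockTriangular_eq_structuralSet, structuralSet_eq_structuralSet_iff]
    refine ⟨fun ⟨i, j, hij, hi, hj⟩ => ?_, fun ⟨π, c, hc, hρ⟩ =>
      exists_least_ne_greatest_of_monotone_perm π c hc hρ⟩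
    obtain ⟨π, c, hc, hρ⟩ := Fin3.exists_monotone_perm_of_least_ne_greatest hrefl htrans hij hi hj
    exact ⟨π, (↑) ∘ c, Fin.val_strictMono.monotone.comp hc,
      fun a b => (hρ a b).trans Fin.val_fin_le.symm⟩
end

section
/- Let A_ρ ⊆ M_n be a structural matrix algebra and let φ : A_ρ → M_n be a continuous map which preserves spectrum. Then φ preserves characteristic polynomials: det(x·I − φ(X)) = det(x·I − X) as polynomials in x, for every X ∈ A_ρ. -/
/-!
Matrices whose characteristic polynomial is separable are dense in `A_ρ`: along the complex line
through any `X ∈ A_ρ` and a diagonal matrix with distinct entries, the resultant of the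
characteristic polynomial and its derivative is a polynomial in the parameter, nonzero at the
diagonal end, so it vanishes at only finitely many points. A matrix with `n` distinct eigenvalues
has its characteristic polynomial determined by its spectrum, so `φ X` and `X` have the same
characteristic polynomial on this dense set, and by continuity everywhere.
-/

open Matrix Polynomial

namespace Polynomial

variable {K : Type*} [Field K]

theorem resultant_derivative_ne_zero_iff [CharZero K] {f : K[X]} (hf : f ≠ 0) :
    f.resultant (derivative f) f.natDegree (f.natDegree - 1) ≠ 0 ↔ f.Separable := by
  rw [← natDegree_derivative, Ne, resultant_eq_zero_iff]
  simp [hf, Separable]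

theorem eq_of_separable_of_forall_isRoot [IsAlgClosed K] {p q : K[X]} (hp : p.Monic)
    (hq : q.Monic) (hsep : p.Separable) (hdeg : q.natDegree ≤ p.natDegree)
    (hroots : ∀ a, p.IsRoot a → q.IsRoot a) : q = p := by
  refine eq_of_monic_of_dvd_of_natDegree_le hp hq ?_ hdeg
  rw [(IsAlgClosed.splits p).eq_prod_roots_of_monic hp,
    Multiset.prod_X_sub_C_dvd_iff_le_roots hq.ne_zero, Multiset.le_iff_subset (nodup_roots hsep)]
  intro a ha
  rw [mem_roots hq.ne_zero]
  exact hroots a ((mem_roots hp.ne_zero).1 ha)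

end Polynomial

namespace Matrix

variable {ι : Type*} [DecidableEq ι]

theorem add_smul_sub_diagonal_apply_eq_zero {R : Type*} [CommRing R] {ρ : ι → ι → Prop}
    (hρ : ∀ i, ρ i i) {X : Matrix ι ι R} (hX : ∀ i j, ¬ρ i j → X i j = 0) (d : ι → R) (t : R) :
    ∀ i j, ¬ρ i j → (X + t • (diagonal d - X)) i j = 0 := by
  intro i j hij
  have hne : i ≠ j := fun h => hij (h ▸ hρ i)
  simp [hX i j hij, diagonal_apply_ne _ hne]

variable [Fintype ι]

section Algebra

variable {K : Type*} [Field K]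

theorem charpoly_eq_of_spectrum_eq [IsAlgClosed K] {M N : Matrix ι ι K}
    (hN : N.charpoly.Separable) (h : spectrum K M = spectrum K N) : M.charpoly = N.charpoly :=
  eq_of_separable_of_forall_isRoot N.charpoly_monic M.charpoly_monic hN
    (by rw [charpoly_natDegree_eq_dim, charpoly_natDegree_eq_dim]) fun a ha => by
      rwa [← mem_spectrum_iff_isRoot_charpoly, h, mem_spectrum_iff_isRoot_charpoly]

theorem finite_setOf_not_separable_charpoly_add_smul_sub [CharZero K] (M N : Matrix ι ι K)
    (hN : N.charpoly.Separable) :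
    {t : K | ¬(M + t • (N - M)).charpoly.Separable}.Finite := by
  set L : Matrix ι ι K[X] := M.map C + (X : K[X]) • (N - M).map C
  have hL (t : K) : L.map (evalRingHom t) = M + t • (N - M) := by
    ext i j
    simp [L]
  set r : K[X] := L.charpoly.resultant (derivative L.charpoly) (Fintype.card ι)
    (Fintype.card ι - 1)
  have hr (t : K) : r.eval t ≠ 0 ↔ (M + t • (N - M)).charpoly.Separable := by
    rw [← coe_evalRingHom, ← resultant_map_map, ← derivative_map, ← charpoly_map, hL,
      ← charpoly_natDegree_eq_dim (M + t • (N - M))]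
    exact resultant_derivative_ne_zero_iff (charpoly_monic _).ne_zero
  have hr0 : r ≠ 0 := fun h => (hr 1).2 (by simpa using hN) (by simp [h])
  exact (finite_setOfPred_isRoot hr0).subset fun t ht => of_not_not (mt (hr t).1 ht)

end Algebra

section Topology

variable {𝕜 : Type*} [NontriviallyNormedField 𝕜]

theorem continuous_eval_charpoly (z : 𝕜) :
    Continuous fun M : Matrix ι ι 𝕜 => M.charpoly.eval z := by
  simp only [eval_charpoly]
  fun_prop

theorem subset_closure_setOf_separable_charpoly [CompleteSpace 𝕜] [CharZero 𝕜]
    {A : Set (Matrix ι ι 𝕜)} {D : Matrix ι ι 𝕜} (hD : D.charpoly.Separable)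
    (hA : ∀ X ∈ A, ∀ t : 𝕜, X + t • (D - X) ∈ A) :
    A ⊆ closure {X ∈ A | X.charpoly.Separable} := by
  intro X hX
  set γ : 𝕜 → Matrix ι ι 𝕜 := fun t => X + t • (D - X)
  have hγ : Continuous γ := by fun_prop
  have hgood : closure {t | (γ t).charpoly.Separable} = Set.univ := by
    refine Set.eq_univ_of_univ_subset ?_
    rw [← ((finite_setOf_not_separable_charpoly_add_smul_sub X D hD).countable.dense_compl
      𝕜).closure_eq]
    exact closure_mono fun t ht => of_not_not ht
  have hγA : γ '' {t | (γ t).charpoly.Separable} ⊆ {X ∈ A | X.charpoly.Separable} :=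
    Set.image_subset_iff.2 fun t ht => ⟨hA X hX t, ht⟩
  exact closure_mono hγA <|
    image_closure_subset_closure_image hγ ⟨0, hgood ▸ Set.mem_univ 0, by simp [γ]⟩

theorem charpoly_apply_eq_of_spectrum_apply_eq [CompleteSpace 𝕜] [CharZero 𝕜] [IsAlgClosed 𝕜]
    {A : Set (Matrix ι ι 𝕜)} {D : Matrix ι ι 𝕜} (hD : D.charpoly.Separable)
    (hA : ∀ X ∈ A, ∀ t : 𝕜, X + t • (D - X) ∈ A) {φ : Matrix ι ι 𝕜 → Matrix ι ι 𝕜}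
    (hφ : ContinuousOn φ A) (hspec : ∀ X ∈ A, spectrum 𝕜 (φ X) = spectrum 𝕜 X) :
    ∀ X ∈ A, (φ X).charpoly = X.charpoly := by
  intro X hX
  refine Polynomial.funext fun z => ?_
  refine Set.EqOn.of_subset_closure (f := fun X => (φ X).charpoly.eval z)
    (g := fun X => X.charpoly.eval z) (fun Y hY => ?_)
    ((continuous_eval_charpoly z).comp_continuousOn hφ) (continuous_eval_charpoly z).continuousOn
    (Set.sep_subset _ _) (subset_closure_setOf_separable_charpoly hD hA) hX
  simp only [charpoly_eq_of_spectrum_eq hY.2 (hspec Y hY.1)]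

end Topology

end Matrix

theorem stmt_13_general (n : ℕ) (ρ : Fin n → Fin n → Prop)
    (hrefl : ∀ i, ρ i i)
    (A : Set (Matrix (Fin n) (Fin n) ℂ))
    (hA : A = {X : Matrix (Fin n) (Fin n) ℂ | ∀ i j, ¬ ρ i j → X i j = 0})
    (φ : Matrix (Fin n) (Fin n) ℂ → Matrix (Fin n) (Fin n) ℂ)
    (hcont : ContinuousOn φ A)
    (hspec : ∀ X ∈ A, spectrum ℂ (φ X) = spectrum ℂ X) :
    ∀ X ∈ A, (φ X).charpoly = X.charpoly := by
  have hD : (diagonal fun i : Fin n => (i : ℂ)).charpoly.Separable := by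
    rw [charpoly_diagonal]
    exact separable_prod_X_sub_C_iff.2 (Nat.cast_injective.comp Fin.val_injective)
  refine charpoly_apply_eq_of_spectrum_apply_eq hD ?_ hcont hspec
  rw [hA]
  exact fun X hX t => add_smul_sub_diagonal_apply_eq_zero hrefl hX _ t

theorem stmt_13 (n : ℕ) (ρ : Fin n → Fin n → Prop)
    (hrefl : ∀ i, ρ i i) (htrans : ∀ i j k, ρ i j → ρ j k → ρ i k)
    (A : Set (Matrix (Fin n) (Fin n) ℂ))
    (hA : A = {X : Matrix (Fin n) (Fin n) ℂ | ∀ i j, ¬ ρ i j → X i j = 0})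
    (φ : Matrix (Fin n) (Fin n) ℂ → Matrix (Fin n) (Fin n) ℂ)
    (hcont : ContinuousOn φ A)
    (hspec : ∀ X ∈ A, spectrum ℂ (φ X) = spectrum ℂ X) :
    ∀ X ∈ A, (φ X).charpoly = X.charpoly :=
  stmt_13_general n ρ hrefl A hA φ hcont hspec
end

section
/- Let A_ρ ⊆ M_n be a structural matrix algebra and let φ : A_ρ → M_n be a continuous map which preserves commutativity and spectrum. Then for each matrix S that is invertible with S, S⁻¹ ∈ A_ρ, there exists an invertible matrix T ∈ M_n such that φ(S D S⁻¹) = T D T⁻¹ for every diagonal matrix D ∈ M_n. -/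
/-!
Put `Ψ e = φ (S * diagonal e * S⁻¹)`. These matrices commute pairwise and `Ψ e` has spectrum
`range e`. For an injective `d`, `Ψ d` has distinct eigenvalues, so an eigenbasis `T`
diagonalises it, and then `T` diagonalises everything commuting with `Ψ d`:
`T⁻¹ * Ψ e * T = diagonal (f e)`. The map `f` is continuous and each `f e` takes values among
the entries of `e`. The injective tuples form a dense connected set (the complement of finitely
many complex hyperplanes), on which the entries of a tuple cannot be permuted continuously
without colliding; as `f d = d`, `f` is the identity there, hence everywhere.
-/

open Matrix Function Set

variable {ι : Type*}

theorem exists_injective_of_charZero (R : Type*) [AddMonoidWithOne R] [CharZero R] [Countable ι] :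
    ∃ d : ι → R, Injective d := by
  obtain ⟨d, hd⟩ := Countable.exists_injective_nat ι
  exact ⟨fun i => (d i : R), Nat.cast_injective.comp hd⟩

section Injective

variable {K : Type*} [Field K]

theorem countable_setOf_not_injective_lineMap [Countable ι] {d : ι → K} (hd : Injective d)
    (e : ι → K) : {t : K | ¬ Injective (AffineMap.lineMap d e t : ι → K)}.Countable := by
  have hsub : {t : K | ¬ Injective (AffineMap.lineMap d e t : ι → K)} ⊆
      ⋃ p : {p : ι × ι // p.1 ≠ p.2},
        {t | AffineMap.lineMap d e t p.1.1 = AffineMap.lineMap d e t p.1.2} := by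
    intro t ht
    simp only [Injective, not_forall] at ht
    obtain ⟨a, b, hab, hne⟩ := ht
    exact mem_iUnion.mpr ⟨⟨(a, b), hne⟩, hab⟩
  -- distinct coordinates of the line differ at `t = 0`; affine in `t`, they agree at most once
  refine (countable_iUnion fun p => Subsingleton.countable ?_).mono hsub
  rintro t₁ ht₁ t₂ ht₂
  simp only [mem_ofPred_eq, AffineMap.lineMap_apply_module, Pi.add_apply, Pi.smul_apply,
    smul_eq_mul] at ht₁ ht₂
  by_contra hne
  have hslope : e p.1.1 - e p.1.2 = d p.1.1 - d p.1.2 := by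
    have h : (t₁ - t₂) * ((e p.1.1 - e p.1.2) - (d p.1.1 - d p.1.2)) = 0 := by
      linear_combination ht₁ - ht₂
    linear_combination (mul_eq_zero.mp h).resolve_left (sub_ne_zero.mpr hne)
  exact p.2 (hd (sub_eq_zero.mp (by linear_combination ht₁ - t₁ * hslope)))

theorem lineMap_image_subset_setOf_injective (d e : ι → K) :
    AffineMap.lineMap d e '' {t : K | ¬ Injective (AffineMap.lineMap d e t : ι → K)}ᶜ ⊆
      {x | Injective x} := by
  rintro _ ⟨t, ht, rfl⟩
  exact not_not.mp ht

theorem isPreconnected_setOf_injective [Countable ι] :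
    IsPreconnected {e : ι → ℂ | Injective e} := by
  obtain ⟨d, hd⟩ := exists_injective_of_charZero (ι := ι) ℂ
  refine isPreconnected_of_forall d fun e he => ⟨_, lineMap_image_subset_setOf_injective d e,
    ⟨0, ?_, AffineMap.lineMap_apply_zero _ _⟩, ⟨1, ?_, AffineMap.lineMap_apply_one _ _⟩, ?_⟩
  · simpa using hd
  · simpa using he
  · have hconn := (countable_setOf_not_injective_lineMap hd e).isPathConnected_compl_of_one_lt_rank
      (by simp [Complex.rank_real_complex])
    exact (hconn.image AffineMap.lineMap_continuous).isConnected.isPreconnected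

theorem dense_setOf_injective [Countable ι] : Dense {e : ι → ℂ | Injective e} := by
  obtain ⟨d, hd⟩ := exists_injective_of_charZero (ι := ι) ℂ
  intro e
  have h1 : (1 : ℂ) ∈ closure {t : ℂ | ¬ Injective (AffineMap.lineMap d e t : ι → ℂ)}ᶜ :=
    (countable_setOf_not_injective_lineMap hd e).dense_compl ℂ 1
  have he := image_closure_subset_closure_image (AffineMap.lineMap_continuous (p := d) (q := e))
    (mem_image_of_mem _ h1)
  rw [AffineMap.lineMap_apply_one] at he
  exact closure_mono (lineMap_image_subset_setOf_injective d e) he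

theorem IsPreconnected.eqOn_of_range_subset {X α : Type*} [TopologicalSpace X]
    [TopologicalSpace α] [T2Space α] [Finite ι] {G : Set X} (hG : IsPreconnected G)
    {f g : X → ι → α} (hf : Continuous f) (hg : Continuous g) (hinj : ∀ t ∈ G, Injective (g t))
    (hrange : ∀ t ∈ G, range (f t) ⊆ range (g t)) {t₀ : X} (ht₀ : t₀ ∈ G) (heq : f t₀ = g t₀) :
    EqOn f g G := by
  intro t ht
  funext i
  let C : ι → Set X := fun k => {t | f t i = g t k}
  have hC : ∀ k, IsClosed (C k) := fun k =>
    isClosed_eq ((continuous_apply i).comp hf) ((continuous_apply k).comp hg)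
  have hcover : G ⊆ C i ∪ ⋃ k ∈ ({i}ᶜ : Set ι), C k := by
    intro t ht
    obtain ⟨k, hk⟩ := hrange t ht (mem_range_self i)
    by_cases hki : k = i
    · exact Or.inl (hki ▸ hk.symm)
    · exact Or.inr (mem_biUnion hki hk.symm)
  suffices h : ¬ (G ∩ ⋃ k ∈ ({i}ᶜ : Set ι), C k).Nonempty from
    (hcover ht).resolve_right fun hk => h ⟨t, ht, hk⟩
  intro hne
  obtain ⟨s, hs, hsi, hsk⟩ := isPreconnected_closed_iff.mp hG _ _ (hC i)
    ((Set.toFinite _).isClosed_biUnion fun k _ => hC k) hcover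
    ⟨t₀, ht₀, congrFun heq i⟩ hne
  obtain ⟨k, hki, hk⟩ := mem_iUnion₂.mp hsk
  exact hki (hinj s hs (hsi.symm.trans hk)).symm

theorem eq_id_of_range_subset [Finite ι] {f : (ι → ℂ) → ι → ℂ} (hf : Continuous f)
    (hrange : ∀ e, range (f e) ⊆ range e) {d : ι → ℂ} (hd : Injective d) (hfd : f d = d) :
    f = id :=
  hf.ext_on dense_setOf_injective continuous_id <|
    isPreconnected_setOf_injective.eqOn_of_range_subset hf continuous_id (fun _ h => h)
      (fun e _ => hrange e) hd hfd

end Injective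

theorem Commute.units_conj {M : Type*} [Monoid M] {a b : M} (h : Commute a b) (u : Mˣ) :
    Commute (u * a * ↑u⁻¹) (u * b * ↑u⁻¹) := by
  simp only [Commute, SemiconjBy, mul_assoc, Units.inv_mul_cancel_left, ← mul_assoc a, h.eq]

section Diagonalization

variable [Fintype ι] [DecidableEq ι]

theorem Matrix.exists_units_inv_mul_mul_eq_diagonal {K : Type*} [Field K] {M : Matrix ι ι K}
    {d : ι → K} (hd : Injective d) (hspec : ∀ i, d i ∈ spectrum K M) :
    ∃ U : (Matrix ι ι K)ˣ, (↑U⁻¹ : Matrix ι ι K) * M * (U : Matrix ι ι K) = diagonal d := by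
  have hev (i : ι) : ∃ v, Module.End.HasEigenvector M.toLin' (d i) v := by
    refine (Module.End.hasEigenvalue_iff_mem_spectrum.mpr ?_).exists_hasEigenvector
    rw [spectrum_toLin']
    exact hspec i
  choose v hv using hev
  have hT : IsUnit (of v)ᵀ := linearIndependent_cols_iff_isUnit.mp
    (Module.End.eigenvectors_linearIndependent' _ d hd v hv)
  have hMT : M * (of v)ᵀ = (of v)ᵀ * diagonal d := by
    ext k i
    have := congrFun (hv i).apply_eq_smul k
    simp only [toLin'_apply, Pi.smul_apply, smul_eq_mul] at this
    change (M *ᵥ v i) k = _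
    rw [this, mul_diagonal, transpose_apply, of_apply, mul_comm]
  obtain ⟨U, hU⟩ := hT
  refine ⟨U, ?_⟩
  rw [mul_assoc, hU, hMT, ← mul_assoc, ← hU, Units.inv_mul, one_mul]

theorem Matrix.eq_diagonal_of_commute_diagonal {R : Type*} [CommRing R] [NoZeroDivisors R]
    {B : Matrix ι ι R} {d : ι → R} (hd : Injective d) (h : Commute B (diagonal d)) :
    B = diagonal fun i => B i i := by
  ext i j
  rcases eq_or_ne i j with rfl | hij
  · simp
  · have hij' := congrFun₂ h.eq i j
    rw [mul_diagonal, diagonal_mul] at hij'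
    have : B i j * (d j - d i) = 0 := by linear_combination hij'
    rw [diagonal_apply_ne _ hij]
    exact (mul_eq_zero.mp this).resolve_right (sub_ne_zero.mpr (hd.ne hij).symm)

theorem Matrix.exists_units_conj_diagonal_of_spectrum_eq_range {Ψ : (ι → ℂ) → Matrix ι ι ℂ}
    (hcont : Continuous Ψ) (hcomm : ∀ e e', Commute (Ψ e) (Ψ e'))
    (hspec : ∀ e, spectrum ℂ (Ψ e) = range e) :
    ∃ U : (Matrix ι ι ℂ)ˣ, ∀ e, Ψ e = U * diagonal e * (↑U⁻¹ : Matrix ι ι ℂ) := by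
  obtain ⟨d, hd⟩ := exists_injective_of_charZero (ι := ι) ℂ
  obtain ⟨U, hU⟩ := exists_units_inv_mul_mul_eq_diagonal hd fun i => hspec d ▸ mem_range_self i
  let f : (ι → ℂ) → ι → ℂ := fun e i => ((↑U⁻¹ : Matrix ι ι ℂ) * Ψ e * U) i i
  have hdiag (e : ι → ℂ) : (↑U⁻¹ : Matrix ι ι ℂ) * Ψ e * U = diagonal (f e) :=
    eq_diagonal_of_commute_diagonal hd <| by
      simpa only [inv_inv, hU] using (hcomm e d).units_conj U⁻¹
  have hf : f = id := by
    refine eq_id_of_range_subset (by fun_prop) (fun e => ?_) hd ?_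
    · rw [← spectrum_diagonal (R := ℂ), ← hdiag, spectrum.units_conjugate', hspec]
    · funext i
      simp only [f, hU, diagonal_apply_eq]
  refine ⟨U, fun e => ?_⟩
  have h := hdiag e
  rw [hf, id_eq] at h
  rw [← h]
  simp only [mul_assoc, Units.mul_inv_cancel_left, Units.mul_inv, mul_one]

end Diagonalization

def Matrix.structuralMatrices {R : Type*} [Zero R] (ρ : ι → ι → Prop) : Set (Matrix ι ι R) :=
  {X | ∀ i j, ¬ ρ i j → X i j = 0}

theorem Matrix.mul_mem_structuralMatrices {R : Type*} [Fintype ι] [NonUnitalNonAssocSemiring R]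
    {ρ : ι → ι → Prop} (htrans : ∀ i j k, ρ i j → ρ j k → ρ i k) {X Y : Matrix ι ι R}
    (hX : X ∈ structuralMatrices ρ) (hY : Y ∈ structuralMatrices ρ) :
    X * Y ∈ structuralMatrices ρ := by
  intro i j hij
  rw [mul_apply]
  refine Finset.sum_eq_zero fun k _ => ?_
  by_cases hik : ρ i k
  · rw [hY k j fun hkj => hij (htrans i k j hik hkj), mul_zero]
  · rw [hX i k hik, zero_mul]

theorem Matrix.diagonal_mem_structuralMatrices {R : Type*} [DecidableEq ι] [Zero R]
    {ρ : ι → ι → Prop} (hrefl : ∀ i, ρ i i) (d : ι → R) :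
    diagonal d ∈ structuralMatrices ρ :=
  fun i _ hij => diagonal_apply_ne d fun h => hij (h ▸ hrefl i)

theorem stmt_14 (n : ℕ) (ρ : Fin n → Fin n → Prop)
    (hrefl : ∀ i, ρ i i) (htrans : ∀ i j k, ρ i j → ρ j k → ρ i k)
    (A : Set (Matrix (Fin n) (Fin n) ℂ))
    (hA : A = {X : Matrix (Fin n) (Fin n) ℂ | ∀ i j, ¬ ρ i j → X i j = 0})
    (φ : Matrix (Fin n) (Fin n) ℂ → Matrix (Fin n) (Fin n) ℂ)
    (hcont : ContinuousOn φ A)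
    (hcomm : ∀ X ∈ A, ∀ Y ∈ A, X * Y = Y * X → φ X * φ Y = φ Y * φ X)
    (hspec : ∀ X ∈ A, spectrum ℂ (φ X) = spectrum ℂ X) :
    ∀ S : Matrix (Fin n) (Fin n) ℂ, S ∈ A → S⁻¹ ∈ A → IsUnit S →
      ∃ T : Matrix (Fin n) (Fin n) ℂ, IsUnit T ∧
        ∀ d : Fin n → ℂ,
          φ (S * Matrix.diagonal d * S⁻¹) = T * Matrix.diagonal d * T⁻¹ := by
  change A = structuralMatrices ρ at hA
  subst hA
  intro S hS hSinv hSu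
  obtain ⟨U, hU⟩ := hSu
  have hmem (e : Fin n → ℂ) : S * diagonal e * S⁻¹ ∈ structuralMatrices ρ :=
    mul_mem_structuralMatrices htrans
      (mul_mem_structuralMatrices htrans hS (diagonal_mem_structuralMatrices hrefl e)) hSinv
  obtain ⟨V, hV⟩ := exists_units_conj_diagonal_of_spectrum_eq_range
    (Ψ := fun e => φ (S * diagonal e * S⁻¹)) (hcont.comp_continuous (by fun_prop) hmem)
    (fun e e' => hcomm _ (hmem e) _ (hmem e') <| by
      simpa only [hU, coe_units_inv] using ((Matrix.commute_diagonal e e').units_conj U).eq)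
    (fun e => by
      rw [hspec _ (hmem e), ← hU, ← coe_units_inv, spectrum.units_conjugate, spectrum_diagonal])
  exact ⟨V, V.isUnit, fun d => by rw [hV, coe_units_inv]⟩
end
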